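/- arXiv:1409.3820 — 9 statements merged into one kernel-verified Lean document; each statement's English description precedes it below -/
import Mathlib

section
/- For every prime p ≥ 5, C(2p − 1, p − 1) ≡ 1 (mod p^3). -/
open Finset

/-- Pairing `k ↔ 2m+1-k` in a product over `Ico 1 (2m+1)`. -/
@[to_additive]
lemma wols_prod_pairing {M : Type*} [CommMonoid M] (m : ℕ) (f : ℕ → M) :
    ∏ k ∈ Ico 1 (2*m+1), f k = ∏ k ∈ Ico 1 (m+1), (f k * f (2*m+1-k)) := by
  rw [← Finset.prod_Ico_consecutive f (show 1 ≤ m+1 by omega) (show m+1 ≤ 2*m+1 by omega),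
    prod_mul_distrib]
  congr 1
  rw [eq_comm]
  refine Finset.prod_nbij' (fun k => 2*m+1-k) (fun k => 2*m+1-k) ?_ ?_ ?_ ?_ ?_ <;>
    intro a ha <;> simp only [mem_Ico] at * <;> first | omega | (congr 1; omega)

/-- Expansion of a product of `a i + c` with `c` of square zero. -/
lemma wols_prod_add_sq_zero {R : Type*} [CommRing R] (c : R) (hc : c * c = 0)
    (s : Finset ℕ) (a : ℕ → R) :
    ∏ i ∈ s, (a i + c) = ∏ i ∈ s, a i + c * ∑ i ∈ s, ∏ j ∈ s.erase i, a j := by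
  induction s using Finset.induction with
  | empty => simp
  | @insert x s hx ih =>
      rw [prod_insert hx, prod_insert hx, ih, sum_insert hx, erase_insert hx]
      have hsum : ∑ i ∈ s, ∏ j ∈ (insert x s).erase i, a j
          = a x * ∑ i ∈ s, ∏ j ∈ s.erase i, a j := by
        rw [mul_sum]
        refine Finset.sum_congr rfl fun i hi => ?_
        rw [Finset.erase_insert_of_ne (by rintro rfl; exact hx hi),
          prod_insert (fun h => hx (Finset.erase_subset _ _ h))]
      rw [hsum]
      linear_combination (∑ i ∈ s, ∏ j ∈ s.erase i, a j) * hc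

/-- An element of `ZMod (p^3)` that maps to `0` in `ZMod p` is a multiple of `p`. -/
lemma wols_lift (p : ℕ) (hp : p.Prime) (x : ZMod (p^3))
    (h : (ZMod.castHom (dvd_pow_self p three_ne_zero) (ZMod p)) x = 0) :
    ∃ y : ZMod (p^3), x = (p : ZMod (p^3)) * y := by
  haveI : NeZero (p^3) := ⟨pow_ne_zero _ hp.ne_zero⟩
  have hx : ((x.val : ℕ) : ZMod (p^3)) = x := ZMod.natCast_zmod_val x
  rw [← hx, map_natCast, ZMod.natCast_eq_zero_iff] at h
  obtain ⟨t, ht⟩ := h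
  exact ⟨(t : ZMod (p^3)), by rw [← hx, ht]; push_cast; ring⟩

/-- `∑_{k=1}^{(p-1)/2} 1/k² = 0` in `ZMod p` for `p ≥ 5` prime. -/
lemma wols_sum_inv_sq (p : ℕ) (hp : p.Prime) (h5 : 5 ≤ p) (m : ℕ) (hm : p = 2*m+1) :
    ∑ k ∈ Ico 1 (m+1), ((k : ZMod p)^2)⁻¹ = 0 := by
  haveI : Fact p.Prime := ⟨hp⟩
  have h2 : (2 : ZMod p) ≠ 0 := by
    intro h
    have h' : ((2:ℕ) : ZMod p) = 0 := by exact_mod_cast h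
    have := (ZMod.natCast_eq_zero_iff 2 p).mp h'
    exact absurd (Nat.le_of_dvd two_pos this) (by omega)
  have key : (2 : ZMod p) * ∑ k ∈ Ico 1 (m+1), ((k : ZMod p)^2)⁻¹ = 0 := by
    have pair : ∑ k ∈ Ico 1 (2*m+1), (((k : ZMod p))^2)⁻¹
        = ∑ k ∈ Ico 1 (m+1), ((((k : ZMod p))^2)⁻¹ + (((2*m+1-k : ℕ) : ZMod p)^2)⁻¹) :=
      wols_sum_pairing m _
    have hsymm : ∀ k ∈ Ico 1 (m+1), (((2*m+1-k : ℕ) : ZMod p)^2)⁻¹ = (((k : ZMod p))^2)⁻¹ := by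
      intro k hk
      simp only [mem_Ico] at hk
      have hkp : k ≤ p := by omega
      have : ((2*m+1-k : ℕ) : ZMod p) = -(k : ZMod p) := by
        have : ((2*m+1 : ℕ) : ZMod p) = 0 := by rw [← hm]; exact ZMod.natCast_self p
        rw [Nat.cast_sub (by omega)]
        push_cast
        rw [show ((2:ZMod p)*m+1 : ZMod p) = ((2*m+1 : ℕ) : ZMod p) by push_cast; ring, this]
        ring
      rw [this, neg_sq]
    have pair2 : (2 : ZMod p) * ∑ k ∈ Ico 1 (m+1), ((k : ZMod p)^2)⁻¹
        = ∑ k ∈ Ico 1 (2*m+1), (((k : ZMod p))^2)⁻¹ := by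
      rw [pair, Finset.mul_sum]
      exact Finset.sum_congr rfl fun k hk => by rw [hsymm k hk, two_mul]
    rw [pair2, ← hm]
    -- now show ∑_{k ∈ Ico 1 p} (k²)⁻¹ = 0 in ZMod p
    have step1 : ∑ k ∈ Ico 1 p, (((k : ZMod p))^2)⁻¹
        = ∑ x ∈ (univ : Finset (ZMod p)) \ {0}, (x^2)⁻¹ := by
      refine Finset.sum_nbij' (fun k => ((k : ZMod p))) (fun x => x.val) ?_ ?_ ?_ ?_ ?_
      · intro a ha
        simp only [mem_Ico] at ha
        simp only [mem_sdiff, mem_univ, mem_singleton, true_and]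
        intro h0
        exact absurd (Nat.le_of_dvd (by omega)
          ((ZMod.natCast_eq_zero_iff a p).mp h0)) (by omega)
      · intro x hx
        simp only [mem_sdiff, mem_univ, mem_singleton, true_and] at hx
        simp only [mem_Ico]
        constructor
        · rcases Nat.eq_zero_or_pos x.val with h | h
          · exact absurd ((ZMod.val_eq_zero x).mp h) hx
          · omega
        · exact ZMod.val_lt x
      · intro a ha
        simp only [mem_Ico] at ha
        exact ZMod.val_natCast_of_lt (by omega)
      · intro x _
        exact ZMod.natCast_zmod_val x
      · intro a _
        rfl
    have step2 : ∑ x ∈ (univ : Finset (ZMod p)) \ {0}, (x^2)⁻¹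
        = ∑ x ∈ (univ : Finset (ZMod p)) \ {0}, x^2 := by
      refine Finset.sum_nbij' (fun x => x⁻¹) (fun x => x⁻¹) ?_ ?_ ?_ ?_ ?_ <;>
        intro a ha <;>
        simp only [mem_sdiff, mem_univ, mem_singleton, true_and] at * <;>
        first
        | exact inv_ne_zero ha
        | exact inv_inv a
        | rw [inv_pow]
    have step3 : ∑ x ∈ (univ : Finset (ZMod p)) \ {0}, x^2 = ∑ x : ZMod p, x^2 := by
      rw [Finset.sum_sdiff_eq_sub (Finset.subset_univ _)]
      simp
    have step4 : ∑ x : ZMod p, x^2 = 0 := by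
      have hcard : 2 < Fintype.card (ZMod p) - 1 := by rw [ZMod.card]; omega
      exact FiniteField.sum_pow_lt_card_sub_one (ZMod p) 2 hcard
    rw [step1, step2, step3, step4]
  rcases mul_eq_zero.mp key with h | h
  · exact absurd h h2
  · exact h

theorem wolstenholme (p : ℕ) (hp : p.Prime) (h5 : 5 ≤ p) :
    Nat.choose (2 * p - 1) (p - 1) ≡ 1 [MOD p ^ 3] := by
  haveI : Fact p.Prime := ⟨hp⟩
  haveI : NeZero (p^3) := ⟨pow_ne_zero _ hp.ne_zero⟩
  obtain ⟨m, hm⟩ : ∃ m, p = 2*m+1 := by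
    rcases hp.eq_two_or_odd' with h | ⟨m, h⟩
    · omega
    · exact ⟨m, h⟩
  set R := ZMod (p^3)
  -- Step A : Nat identity
  have natA : (p-1).factorial * Nat.choose (2*p-1) (p-1) = ∏ k ∈ Ico 1 p, (p + k) := by
    have h1 : Nat.choose (2*p-1) (p-1) * (p-1).factorial * p.factorial = (2*p-1).factorial := by
      have := Nat.choose_mul_factorial_mul_factorial (show p-1 ≤ 2*p-1 by omega)
      rwa [show 2*p-1-(p-1) = p by omega] at this
    have h2 : (∏ k ∈ Ico 1 p, (p + k)) * p.factorial = (2*p-1).factorial := by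
      rw [← Finset.prod_Ico_id_eq_factorial p, ← Finset.prod_Ico_id_eq_factorial (2*p-1),
        show 2*p-1+1 = 2*p by omega, mul_comm,
        ← Finset.prod_Ico_consecutive _ (show 1 ≤ p+1 by omega) (show p+1 ≤ 2*p by omega)]
      congr 1
      rw [Finset.prod_Ico_eq_prod_range, Finset.prod_Ico_eq_prod_range]
      refine Finset.prod_congr (by congr 1; omega) fun i _ => by omega
    have hpfac : 0 < p.factorial := Nat.factorial_pos p
    have heq := h1.trans h2.symm
    exact Nat.eq_of_mul_eq_mul_right hpfac (by rw [mul_comm (Nat.factorial (p-1))]; exact heq)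
  -- basic facts in R
  have hε3 : (p : R)^3 = 0 := by
    have h0 : ((p^3 : ℕ) : R) = 0 := ZMod.natCast_self (p^3)
    exact_mod_cast h0
  have hc : (2*(p:R)^2) * (2*(p:R)^2) = 0 := by linear_combination (4*(p:R)) * hε3
  -- Step B : cast to R
  have castA : (((p-1).factorial : ℕ) : R) * ((Nat.choose (2*p-1) (p-1) : ℕ) : R)
      = ∏ k ∈ Ico 1 p, ((p:R) + (k:R)) := by
    rw [← Nat.cast_mul, natA, Nat.cast_prod]
    exact Finset.prod_congr rfl fun k _ => by push_cast; ring
  -- Step C : pairing in R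
  have pairing : ∏ k ∈ Ico 1 p, ((p:R) + (k:R))
      = ∏ k ∈ Ico 1 (m+1), (((k*(p-k) : ℕ) : R) + 2*(p:R)^2) := by
    have hIco : Ico 1 p = Ico 1 (2*m+1) := by rw [hm]
    rw [hIco, wols_prod_pairing m (fun k => (p : R) + (k:R))]
    refine Finset.prod_congr rfl fun k hk => ?_
    simp only [mem_Ico] at hk
    have hsub : 2*m+1-k = p-k := by omega
    rw [hsub]
    have h1 : ((p-k : ℕ) : R) = (p : R) - (k:R) := by
      rw [Nat.cast_sub (by omega)]
    have h2 : ((k*(p-k) : ℕ) : R) = (k:R) * ((p : R) - (k:R)) := by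
      rw [Nat.cast_mul, h1]
    rw [h1, h2]
    ring
  -- Step D : expansion
  have expand := wols_prod_add_sq_zero (2*(p:R)^2) hc (Ico 1 (m+1))
    (fun k => ((k*(p-k) : ℕ) : R))
  -- the product of the paired terms is (p-1)!
  have prodfac : ∏ k ∈ Ico 1 (m+1), ((k*(p-k) : ℕ) : R) = (((p-1).factorial : ℕ) : R) := by
    have hnat : ∏ k ∈ Ico 1 (m+1), (k*(p-k)) = (p-1).factorial := by
      rw [← Finset.prod_Ico_id_eq_factorial (p-1), show p-1+1 = p by omega, hm]
      exact (wols_prod_pairing m (fun k => k)).symm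
    rw [← hnat, Nat.cast_prod]
  -- the error term vanishes
  have hcastB : (ZMod.castHom (dvd_pow_self p three_ne_zero) (ZMod p))
      (∑ k ∈ Ico 1 (m+1), ∏ j ∈ (Ico 1 (m+1)).erase k, ((j*(p-j) : ℕ) : R)) = 0 := by
    rw [map_sum]
    have hgen : ∀ j ∈ Ico 1 (m+1), ((j*(p-j) : ℕ) : ZMod p) = -((j : ZMod p)^2) := by
      intro j hj
      simp only [mem_Ico] at hj
      rw [Nat.cast_mul, Nat.cast_sub (by omega), ZMod.natCast_self]
      ring
    have hne : ∀ k ∈ Ico 1 (m+1), (-((k : ZMod p)^2)) ≠ 0 := by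
      intro k hk
      simp only [mem_Ico] at hk
      intro h0
      have hk0 : ((k : ZMod p))^2 = 0 := by rwa [neg_eq_zero] at h0
      have : (k : ZMod p) = 0 := pow_eq_zero_iff (n := 2) (by norm_num) |>.mp hk0
      exact absurd (Nat.le_of_dvd (by omega)
        ((ZMod.natCast_eq_zero_iff k p).mp this)) (by omega)
    have step : ∀ k ∈ Ico 1 (m+1),
        (ZMod.castHom (dvd_pow_self p three_ne_zero) (ZMod p))
          (∏ j ∈ (Ico 1 (m+1)).erase k, ((j*(p-j) : ℕ) : R))
        = (∏ j ∈ Ico 1 (m+1), (-((j : ZMod p)^2))) * (-((k : ZMod p)^2))⁻¹ := by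
      intro k hk
      rw [map_prod]
      have hval : ∏ j ∈ (Ico 1 (m+1)).erase k,
          (ZMod.castHom (dvd_pow_self p three_ne_zero) (ZMod p)) ((j*(p-j) : ℕ) : R)
          = ∏ j ∈ (Ico 1 (m+1)).erase k, (-((j : ZMod p)^2)) := by
        refine Finset.prod_congr rfl fun j hj => ?_
        rw [map_natCast]
        exact hgen j (Finset.mem_of_mem_erase hj)
      rw [hval, eq_mul_inv_iff_mul_eq₀ (hne k hk)]
      exact Finset.prod_erase_mul _ _ hk
    rw [Finset.sum_congr rfl step, ← Finset.mul_sum]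
    have hsum0 : ∑ k ∈ Ico 1 (m+1), (-((k : ZMod p)^2))⁻¹ = 0 := by
      have : ∀ k, (-((k : ZMod p)^2))⁻¹ = -(((k : ZMod p)^2)⁻¹) := fun k => by
        rw [inv_neg]
      simp only [this]
      rw [Finset.sum_neg_distrib, wols_sum_inv_sq p hp h5 m hm, neg_zero]
    rw [hsum0, mul_zero]
  obtain ⟨t, ht⟩ := wols_lift p hp _ hcastB
  have hCB : 2*(p:R)^2 * (∑ k ∈ Ico 1 (m+1), ∏ j ∈ (Ico 1 (m+1)).erase k,
      ((j*(p-j) : ℕ) : R)) = 0 := by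
    rw [ht]; linear_combination (2*t) * hε3
  -- conclude
  have main : (((p-1).factorial : ℕ) : R) * ((Nat.choose (2*p-1) (p-1) : ℕ) : R)
      = (((p-1).factorial : ℕ) : R) := by
    rw [castA, pairing, expand, prodfac, hCB, add_zero]
  have hunit : IsUnit (((p-1).factorial : ℕ) : R) := by
    rw [ZMod.isUnit_iff_coprime]
    apply Nat.Coprime.pow_right
    exact ((Nat.Prime.coprime_iff_not_dvd hp).mpr
      (fun h => absurd ((Nat.Prime.dvd_factorial hp).mp h) (by omega))).symm
  have hfin : ((Nat.choose (2*p-1) (p-1) : ℕ) : R) = 1 := by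
    refine hunit.mul_left_cancel ?_
    rw [main, mul_one]
  exact (ZMod.natCast_eq_natCast_iff _ _ _).mp (by rw [hfin, Nat.cast_one])
end

section
/- For every prime p ≥ 5 and every positive integer n, C(np, p) ≡ n (mod p^3). -/
/-!
Write `n = m + 1`, so that `C(np, p) = n · C(mp + p - 1, p - 1)` and
`(p - 1)! · C(mp + p - 1, p - 1) = ∏_{0<k<p} (mp + k) = (p - 1)! · ∏_{0<k<p} (1 + mp/k)`.
Since `(mp)³ ≡ 0 mod p³`, the last product is `1 + mp · H + (mp)² e` with `H = ∑ 1/k` and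
`2e = H² - ∑ 1/k²`. Wolstenholme's `H ≡ 0 mod p²` (pair `k` with `p - k`) and
`∑ 1/k² ≡ ∑_{x ∈ 𝔽_p} x² ≡ 0 mod p` (valid for `p ≥ 5`) make both correction terms vanish.
-/

open Finset

theorem two_mul_prod_one_add_mul_of_pow_three_eq_zero {R ι : Type*} [CommRing R] {a : R}
    (ha : a ^ 3 = 0) (s : Finset ι) (x : ι → R) :
    2 * ∏ i ∈ s, (1 + a * x i) =
      2 + 2 * a * ∑ i ∈ s, x i + a ^ 2 * ((∑ i ∈ s, x i) ^ 2 - ∑ i ∈ s, x i ^ 2) := by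
  classical
  induction s using Finset.induction_on with
  | empty => simp
  | insert i s hi ih =>
    rw [prod_insert hi, sum_insert hi, sum_insert hi, mul_left_comm, ih]
    linear_combination x i * ((∑ i ∈ s, x i) ^ 2 - ∑ i ∈ s, x i ^ 2) * ha

theorem prod_one_add_mul_eq_one_of_pow_three_eq_zero {R ι : Type*} [CommRing R] {a : R}
    (h2 : IsUnit (2 : R)) (ha : a ^ 3 = 0) (s : Finset ι) (x : ι → R)
    (hsum : a * ∑ i ∈ s, x i = 0) (hsum_sq : a ^ 2 * ∑ i ∈ s, x i ^ 2 = 0) :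
    ∏ i ∈ s, (1 + a * x i) = 1 := by
  refine h2.mul_left_cancel ?_
  rw [two_mul_prod_one_add_mul_of_pow_three_eq_zero ha, mul_one]
  linear_combination (2 + a * ∑ i ∈ s, x i) * hsum - hsum_sq

theorem ZMod.natCast_mul_eq_zero_of_castHom_eq_zero {a b n : ℕ} [NeZero n] (hb : b ∣ n)
    (hn : n ∣ a * b) {y : ZMod n} (hy : ZMod.castHom hb (ZMod b) y = 0) :
    (a : ZMod n) * y = 0 := by
  rw [← ZMod.natCast_zmod_val y] at hy ⊢
  rw [map_natCast, ZMod.natCast_eq_zero_iff] at hy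
  rw [← Nat.cast_mul, ZMod.natCast_eq_zero_iff]
  exact hn.trans (Nat.mul_dvd_mul_left a hy)

theorem ZMod.castHom_inv_natCast {n p : ℕ} [Fact p.Prime] (h : p ∣ n) {k : ℕ}
    (hk : k.Coprime n) : ZMod.castHom h (ZMod p) (k : ZMod n)⁻¹ = (k : ZMod p)⁻¹ := by
  refine eq_inv_of_mul_eq_one_right ?_
  rw [← map_natCast (ZMod.castHom h (ZMod p)) k, ← map_mul, ZMod.coe_mul_inv_eq_one k hk, map_one]

theorem ZMod.sum_range_natCast {n : ℕ} [NeZero n] {M : Type*} [AddCommMonoid M]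
    (f : ZMod n → M) : ∑ i ∈ range n, f i = ∑ x, f x := by
  refine sum_nbij' (↑) ZMod.val (fun _ _ => mem_univ _) (fun x _ => mem_range.2 x.val_lt)
    (fun i hi => ZMod.val_cast_of_lt (mem_range.1 hi)) (fun x _ => ZMod.natCast_zmod_val x)
    fun _ _ => rfl

theorem ZMod.isUnit_two_prime_pow {p : ℕ} (hp : p.Prime) (hp2 : p ≠ 2) (m : ℕ) :
    IsUnit (2 : ZMod (p ^ m)) := by
  exact_mod_cast (ZMod.isUnit_iff_coprime 2 (p ^ m)).2
    (Nat.Coprime.pow_right m ((Nat.coprime_primes Nat.prime_two hp).2 hp2.symm))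

theorem Nat.Prime.coprime_pow_of_pos_of_lt {p k : ℕ} (hp : p.Prime) (hk : 0 < k) (hkp : k < p)
    (m : ℕ) : k.Coprime (p ^ m) :=
  Nat.Coprime.pow_right m (Nat.coprime_of_lt_prime hk.ne' hkp hp).symm

section

variable {p : ℕ} [hp : Fact p.Prime]

theorem ZMod.sum_range_inv_sq_eq_zero (h5 : 5 ≤ p) :
    ∑ i ∈ range (p - 1), ((i + 1 : ℕ) : ZMod p)⁻¹ ^ 2 = 0 := by
  have hshift := sum_range_succ' (fun i : ℕ => ((i : ZMod p))⁻¹ ^ 2) (p - 1)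
  rw [Nat.sub_add_cancel hp.out.one_lt.le] at hshift
  calc ∑ i ∈ range (p - 1), ((i + 1 : ℕ) : ZMod p)⁻¹ ^ 2
      = ∑ i ∈ range p, ((i : ZMod p))⁻¹ ^ 2 := by rw [hshift]; simp
    _ = ∑ x : ZMod p, x⁻¹ ^ 2 := ZMod.sum_range_natCast fun x => x⁻¹ ^ 2
    _ = ∑ x : ZMod p, x ^ 2 := Fintype.sum_equiv (Equiv.inv _) _ _ fun _ => rfl
    _ = 0 := FiniteField.sum_pow_lt_card_sub_one _ 2 (by rw [ZMod.card]; omega)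

theorem sq_mul_sum_range_inv_sq_eq_zero (h5 : 5 ≤ p) :
    (p : ZMod (p ^ 3)) ^ 2 * ∑ i ∈ range (p - 1), ((i + 1 : ℕ) : ZMod (p ^ 3))⁻¹ ^ 2 = 0 := by
  rw [← Nat.cast_pow]
  refine ZMod.natCast_mul_eq_zero_of_castHom_eq_zero (dvd_pow_self p three_ne_zero)
    (dvd_of_eq (by ring)) ?_
  rw [map_sum, ← ZMod.sum_range_inv_sq_eq_zero h5]
  refine sum_congr rfl fun i hi => ?_
  rw [map_pow, ZMod.castHom_inv_natCast _
    (hp.out.coprime_pow_of_pos_of_lt i.succ_pos (by rw [mem_range] at hi; omega) 3)]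

-- `1/k + 1/(p-k) = p/(k(p-k))`, and `p²/(p-k) = -p²/k` because `p³ = 0`.
theorem natCast_mul_inv_add_inv_sub {k : ℕ} (hk : 0 < k) (hkp : k < p) :
    (p : ZMod (p ^ 3)) * ((k : ZMod (p ^ 3))⁻¹ + ((p - k : ℕ) : ZMod (p ^ 3))⁻¹) =
      -(p : ZMod (p ^ 3)) ^ 2 * (k : ZMod (p ^ 3))⁻¹ ^ 2 := by
  have hk_inv := ZMod.coe_mul_inv_eq_one k (hp.out.coprime_pow_of_pos_of_lt hk hkp 3)
  have hpk_inv := ZMod.coe_mul_inv_eq_one (p - k)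
    (hp.out.coprime_pow_of_pos_of_lt (Nat.sub_pos_of_lt hkp) (Nat.sub_lt hp.out.pos hk) 3)
  have hp3 : (p : ZMod (p ^ 3)) ^ 3 = 0 := by rw [← Nat.cast_pow, ZMod.natCast_self]
  rw [Nat.cast_sub hkp.le] at hpk_inv ⊢
  set u := (k : ZMod (p ^ 3))⁻¹
  set v := ((p : ZMod (p ^ 3)) - k)⁻¹
  linear_combination (-(p : ZMod (p ^ 3)) * u - p ^ 2 * u ^ 2) * hpk_inv
    + (-(p : ZMod (p ^ 3)) * v - p ^ 2 * u * v) * hk_inv + u ^ 2 * v * hp3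

/-- Wolstenholme's theorem `∑_{0 < k < p} 1/k ≡ 0 mod p²`, stated in `ZMod (p ^ 3)`. -/
theorem natCast_mul_sum_range_inv_eq_zero (h5 : 5 ≤ p) :
    (p : ZMod (p ^ 3)) * ∑ i ∈ range (p - 1), ((i + 1 : ℕ) : ZMod (p ^ 3))⁻¹ = 0 := by
  have hreflect : ∑ i ∈ range (p - 1), ((p - (i + 1) : ℕ) : ZMod (p ^ 3))⁻¹ =
      ∑ i ∈ range (p - 1), ((i + 1 : ℕ) : ZMod (p ^ 3))⁻¹ := by
    rw [← sum_range_reflect]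
    refine sum_congr rfl fun i hi => ?_
    rw [mem_range] at hi
    congr 3
    omega
  refine (ZMod.isUnit_two_prime_pow hp.out (by omega) 3).mul_left_cancel ?_
  calc 2 * ((p : ZMod (p ^ 3)) * ∑ i ∈ range (p - 1), ((i + 1 : ℕ) : ZMod (p ^ 3))⁻¹)
      = ∑ i ∈ range (p - 1), (p : ZMod (p ^ 3)) *
          (((i + 1 : ℕ) : ZMod (p ^ 3))⁻¹ + ((p - (i + 1) : ℕ) : ZMod (p ^ 3))⁻¹) := by
        rw [← mul_sum, sum_add_distrib, hreflect]
        ring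
    _ = -((p : ZMod (p ^ 3)) ^ 2 * ∑ i ∈ range (p - 1), ((i + 1 : ℕ) : ZMod (p ^ 3))⁻¹ ^ 2) := by
        rw [mul_sum, ← sum_neg_distrib]
        refine sum_congr rfl fun i hi => ?_
        rw [natCast_mul_inv_add_inv_sub i.succ_pos (by rw [mem_range] at hi; omega), neg_mul]
    _ = 2 * 0 := by rw [sq_mul_sum_range_inv_sq_eq_zero h5, neg_zero, mul_zero]

theorem choose_mul_add_pred_modEq_one (h5 : 5 ≤ p) (m : ℕ) :
    (m * p + (p - 1)).choose (p - 1) ≡ 1 [MOD p ^ 3] := by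
  rw [← ZMod.natCast_eq_natCast_iff, Nat.cast_one]
  have hfact : IsUnit ((p - 1).factorial : ZMod (p ^ 3)) := (ZMod.isUnit_iff_coprime _ _).2
    (Nat.Coprime.pow_right 3 (hp.out.coprime_factorial_of_lt (Nat.sub_lt hp.out.pos one_pos)).symm)
  have hp3 : (p : ZMod (p ^ 3)) ^ 3 = 0 := by rw [← Nat.cast_pow, ZMod.natCast_self]
  refine hfact.mul_left_cancel ?_
  calc ((p - 1).factorial : ZMod (p ^ 3)) * ((m * p + (p - 1)).choose (p - 1) : ℕ)
      = ∏ i ∈ range (p - 1), ((m * p + 1 + i : ℕ) : ZMod (p ^ 3)) := by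
        rw [← Nat.cast_mul, ← Nat.ascFactorial_eq_factorial_mul_choose,
          Nat.ascFactorial_eq_prod_range, Nat.cast_prod]
    _ = ∏ i ∈ range (p - 1), ((i + 1 : ℕ) : ZMod (p ^ 3)) *
          (1 + (m * p : ZMod (p ^ 3)) * ((i + 1 : ℕ) : ZMod (p ^ 3))⁻¹) := by
        refine prod_congr rfl fun i hi => ?_
        have hinv := ZMod.coe_mul_inv_eq_one (i + 1)
          (hp.out.coprime_pow_of_pos_of_lt i.succ_pos (by rw [mem_range] at hi; omega) 3)
        push_cast at hinv ⊢
        linear_combination (-(m * p : ZMod (p ^ 3))) * hinv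
    _ = ((p - 1).factorial : ZMod (p ^ 3)) * 1 := by
        rw [prod_mul_distrib, ← Nat.cast_prod, prod_range_add_one_eq_factorial]
        congr 1
        refine prod_one_add_mul_eq_one_of_pow_three_eq_zero
          (ZMod.isUnit_two_prime_pow hp.out (by omega) 3) ?_ _ _ ?_ ?_
        · rw [mul_pow, hp3, mul_zero]
        · rw [mul_assoc, natCast_mul_sum_range_inv_eq_zero h5, mul_zero]
        · rw [mul_pow, mul_assoc, sq_mul_sum_range_inv_sq_eq_zero h5, mul_zero]

end

theorem Nat.choose_mul_left_eq_mul_choose_pred {n k : ℕ} (hk : 0 < k) :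
    (n * k).choose k = n * (n * k - 1).choose (k - 1) := by
  rcases Nat.eq_zero_or_pos n with rfl | hn
  · simp [Nat.choose_eq_zero_of_lt hk]
  have h := Nat.add_one_mul_choose_eq (n * k - 1) (k - 1)
  rw [Nat.sub_add_cancel (Nat.mul_pos hn hk), Nat.sub_add_cancel hk] at h
  refine Nat.eq_of_mul_eq_mul_right hk ?_
  rw [← h]
  ring

theorem glaisher_np_choose_p_general (p : ℕ) (hp : p.Prime) (h5 : 5 ≤ p) (n : ℕ) :
    Nat.choose (n * p) p ≡ n [MOD p ^ 3] := by
  have := Fact.mk hp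
  rw [Nat.choose_mul_left_eq_mul_choose_pred hp.pos]
  rcases n with _ | m
  · rw [zero_mul]
  have hsplit : (m + 1) * p - 1 = m * p + (p - 1) := by
    have := hp.pos
    rw [add_one_mul]
    omega
  simpa [hsplit] using (choose_mul_add_pred_modEq_one h5 m).mul_left (m + 1)

theorem glaisher_np_choose_p (p : ℕ) (hp : p.Prime) (h5 : 5 ≤ p) (n : ℕ) (hn : 0 < n) :
    Nat.choose (n * p) p ≡ n [MOD p ^ 3] :=
  glaisher_np_choose_p_general p hp h5 n
end

section
/- If p ≥ 5 is a prime and n, m are positive integers with m ≤ n, then C(np, mp) ≡ C(n, m) (mod p^3). -/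
open Finset Polynomial

namespace LjunggrenAux

variable {p : ℕ}

lemma factorial_add_eq (k : ℕ) :
    ∀ m : ℕ, Nat.factorial (k + m) = Nat.factorial k * ∏ r ∈ Finset.Ico 1 (m + 1), (k + r)
  | 0 => by simp
  | m + 1 => by
    rw [← add_assoc, Nat.factorial_succ, factorial_add_eq k m,
      Finset.prod_Ico_succ_top (Nat.le_add_left 1 m)]
    ring

lemma factorial_mul_eq (hp : 0 < p) :
    ∀ n : ℕ, Nat.factorial (n * p) =
      p ^ n * Nat.factorial n * ∏ i ∈ Finset.range n, ∏ r ∈ Finset.Ico 1 p, (i * p + r)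
  | 0 => by simp
  | n + 1 => by
    have h1 : (n + 1) * p = n * p + p := by ring
    rw [h1, factorial_add_eq, Finset.prod_Ico_succ_top hp, factorial_mul_eq hp n,
      Finset.prod_range_succ, Nat.factorial_succ, pow_succ]
    ring

lemma zmod_prod_eq [Fact p.Prime] :
    ∏ r ∈ Finset.Ico 1 p, ((X : (ZMod p)[X]) + C (r : ZMod p)) = X ^ (p - 1) - 1 := by
  have hp : p.Prime := Fact.out
  have hcard : Fintype.card (ZMod p) = p := ZMod.card p
  have hmonic : ((X : (ZMod p)[X]) ^ p - X).Monic := by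
    apply monic_X_pow_sub
    rw [degree_X]
    exact_mod_cast hp.one_lt
  have hroots : ((X : (ZMod p)[X]) ^ p - X).roots = Finset.univ.val := by
    have := FiniteField.roots_X_pow_card_sub_X (ZMod p)
    rwa [hcard] at this
  have hdeg : ((X : (ZMod p)[X]) ^ p - X).natDegree = p :=
    FiniteField.X_pow_card_sub_X_natDegree_eq (ZMod p) hp.one_lt
  have h1 : ∏ a : ZMod p, ((X : (ZMod p)[X]) - C a) = (X : (ZMod p)[X]) ^ p - X := by
    have h := prod_multiset_X_sub_C_of_monic_of_roots_card_eq hmonic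
      (by rw [hroots, hdeg]; simp [Finset.card_univ, hcard])
    rw [hroots] at h
    rw [Finset.prod_eq_multiset_prod]
    exact h
  have hsplit : ∏ a : ZMod p, ((X : (ZMod p)[X]) - C a)
      = X * ∏ a ∈ Finset.univ.erase (0 : ZMod p), ((X : (ZMod p)[X]) - C a) := by
    rw [← Finset.mul_prod_erase Finset.univ _ (Finset.mem_univ (0 : ZMod p))]
    simp
  have hxp : (X : (ZMod p)[X]) ^ p - X = X * (X ^ (p - 1) - 1) := by
    have h11 : p - 1 + 1 = p := by have := hp.one_lt; omega
    rw [mul_sub, mul_one, ← pow_succ', h11]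
  have h3 : ∏ a ∈ Finset.univ.erase (0 : ZMod p), ((X : (ZMod p)[X]) - C a)
      = X ^ (p - 1) - 1 := by
    apply mul_left_cancel₀ (X_ne_zero : (X : (ZMod p)[X]) ≠ 0)
    rw [← hsplit, h1, hxp]
  rw [← h3]
  refine Finset.prod_bij' (fun r _ => -(r : ZMod p)) (fun a _ => (-a).val) ?_ ?_ ?_ ?_ ?_
  · intro r hr
    simp only [Finset.mem_Ico] at hr
    simp only [Finset.mem_erase, Finset.mem_univ, and_true]
    intro h0
    rw [neg_eq_zero, ZMod.natCast_eq_zero_iff] at h0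
    exact absurd (Nat.le_of_dvd (by omega) h0) (by omega)
  · intro a ha
    simp only [Finset.mem_erase, Finset.mem_univ, and_true] at ha
    simp only [Finset.mem_Ico]
    refine ⟨?_, ZMod.val_lt _⟩
    rw [Nat.one_le_iff_ne_zero]
    intro h0
    rw [ZMod.val_eq_zero, neg_eq_zero] at h0
    exact ha h0
  · intro r hr
    simp only [Finset.mem_Ico] at hr
    show (-(-(r : ZMod p))).val = r
    rw [neg_neg, ZMod.val_cast_of_lt hr.2]
  · intro a _
    show -((((-a).val : ℕ) : ZMod p)) = a
    rw [ZMod.natCast_zmod_val, neg_neg]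
  · intro r _
    rw [map_neg, sub_neg_eq_add]

noncomputable def Pz (p : ℕ) : Polynomial ℤ := ∏ r ∈ Finset.Ico 1 p, (X + C (r : ℤ))

lemma Pz_natDegree (hp : 0 < p) : (Pz p).natDegree = p - 1 := by
  rw [Pz, Polynomial.natDegree_prod_of_monic _ _ (fun r _ => monic_X_add_C _)]
  have h : ∑ i ∈ Finset.Ico 1 p, ((X : Polynomial ℤ) + C (i:ℤ)).natDegree
      = ∑ i ∈ Finset.Ico 1 p, 1 :=
    Finset.sum_congr rfl fun r _ => Polynomial.natDegree_X_add_C _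
  rw [h]
  simp [Nat.card_Ico]

lemma Pz_coeff_zero (hp : 0 < p) : (Pz p).coeff 0 = ((p - 1).factorial : ℤ) := by
  rw [Polynomial.coeff_zero_eq_eval_zero, Pz, Polynomial.eval_prod]
  simp only [Polynomial.eval_add, Polynomial.eval_X, Polynomial.eval_C, zero_add]
  rw [show ((p-1).factorial : ℤ) = ((∏ r ∈ Finset.Ico 1 (p - 1 + 1), r : ℕ) : ℤ) by
    rw [Finset.prod_Ico_id_eq_factorial]]
  rw [show p - 1 + 1 = p by omega]
  push_cast
  rfl

lemma Pz_coeff_dvd (hp : p.Prime) {k : ℕ} (h1 : 1 ≤ k) (h2 : k ≤ p - 2) :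
    (p : ℤ) ∣ (Pz p).coeff k := by
  haveI : Fact p.Prime := ⟨hp⟩
  have hmap : (Pz p).map (Int.castRingHom (ZMod p)) = X ^ (p - 1) - 1 := by
    rw [Pz, Polynomial.map_prod, ← zmod_prod_eq]
    refine Finset.prod_congr rfl fun r _ => ?_
    simp [Polynomial.map_add]
  have := hp.two_le
  have hcoeff : ((Pz p).coeff k : ZMod p) = 0 := by
    have h := congrArg (fun q => Polynomial.coeff q k) hmap
    simp only [Polynomial.coeff_map] at h
    rw [show ((Int.castRingHom (ZMod p)) ((Pz p).coeff k)) = (((Pz p).coeff k : ZMod p)) from rfl] at h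
    rw [h, Polynomial.coeff_sub, Polynomial.coeff_X_pow, Polynomial.coeff_one,
      if_neg (by omega), if_neg (by omega)]
    ring
  rwa [ZMod.intCast_zmod_eq_zero_iff_dvd] at hcoeff

lemma Pz_eval_neg_p (hp : p.Prime) (hodd : Odd p) :
    (Pz p).eval (-(p : ℤ)) = ((p - 1).factorial : ℤ) := by
  have h2 := hp.two_le
  rw [Pz, Polynomial.eval_prod]
  simp only [Polynomial.eval_add, Polynomial.eval_X, Polynomial.eval_C]
  have hbij : ∏ r ∈ Finset.Ico 1 p, (-(p:ℤ) + (r:ℤ)) = ∏ r ∈ Finset.Ico 1 p, (-(r:ℤ)) := by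
    refine Finset.prod_bij' (fun r _ => p - r) (fun r _ => p - r) ?_ ?_ ?_ ?_ ?_
    · intro r hr; simp only [Finset.mem_Ico] at hr; show p - r ∈ Finset.Ico 1 p
      simp only [Finset.mem_Ico]; omega
    · intro r hr; simp only [Finset.mem_Ico] at hr; show p - r ∈ Finset.Ico 1 p
      simp only [Finset.mem_Ico]; omega
    · intro r hr; simp only [Finset.mem_Ico] at hr; show p - (p - r) = r; omega
    · intro r hr; simp only [Finset.mem_Ico] at hr; show p - (p - r) = r; omega
    · intro r hr
      simp only [Finset.mem_Ico] at hr
      have : ((p - r : ℕ) : ℤ) = (p : ℤ) - r := by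
        rw [Nat.cast_sub (le_of_lt hr.2)]
      rw [this]
      ring
  rw [hbij]
  have h4 : ∏ r ∈ Finset.Ico 1 p, (-(r:ℤ)) = ∏ r ∈ Finset.Ico 1 p, ((-1) * (r:ℤ)) :=
    Finset.prod_congr rfl fun r _ => by ring
  rw [h4, Finset.prod_mul_distrib, Finset.prod_const, Nat.card_Ico]
  have heven : Even (p - 1) := Nat.Odd.sub_odd hodd odd_one
  rw [heven.neg_one_pow, one_mul]
  rw [show ((p-1).factorial : ℤ) = ((∏ r ∈ Finset.Ico 1 (p - 1 + 1), r : ℕ) : ℤ) by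
    rw [Finset.prod_Ico_id_eq_factorial]]
  rw [show p - 1 + 1 = p by omega]
  push_cast
  rfl

lemma Pz_eval_trunc (hp : p.Prime) (h5 : 5 ≤ p) (x : ℤ) (hx : (p : ℤ) ∣ x) :
    ((p:ℤ)^3) ∣ (Pz p).eval x - (((p - 1).factorial : ℤ) + (Pz p).coeff 1 * x) := by
  have hdeg : (Pz p).natDegree < p := by rw [Pz_natDegree (by omega)]; omega
  rw [Polynomial.eval_eq_sum_range' hdeg]
  rw [Finset.range_eq_Ico, Finset.sum_eq_sum_Ico_succ_bot (by omega : 0 < p),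
    Finset.sum_eq_sum_Ico_succ_bot (by omega : 1 < p)]
  rw [Pz_coeff_zero (by omega)]
  have hrest : ((p:ℤ)^3) ∣ ∑ k ∈ Finset.Ico 2 p, (Pz p).coeff k * x ^ k := by
    refine Finset.dvd_sum fun k hk => ?_
    simp only [Finset.mem_Ico] at hk
    rcases eq_or_lt_of_le hk.1 with rfl | h3
    · -- k = 2
      obtain ⟨y, hy⟩ := hx
      obtain ⟨c, hc⟩ := Pz_coeff_dvd hp (by omega) (by omega : (2:ℕ) ≤ p - 2)
      rw [hc, hy]
      exact ⟨c * y ^ 2, by ring⟩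
    · -- k ≥ 3
      obtain ⟨y, hy⟩ := hx
      have hxk : x ^ k = x ^ 3 * x ^ (k - 3) := by
        rw [← pow_add]; congr 1; omega
      rw [hxk, hy]
      exact ⟨(Pz p).coeff k * y^3 * ((p:ℤ)*y) ^ (k-3), by ring⟩
  obtain ⟨z, hz⟩ := hrest
  simp only [pow_zero, mul_one, pow_one, hz]
  exact ⟨z, by ring⟩

lemma Pz_coeff_one_dvd (hp : p.Prime) (h5 : 5 ≤ p) : ((p:ℤ)^2) ∣ (Pz p).coeff 1 := by
  have hodd : Odd p := hp.odd_of_ne_two (by omega)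
  have h := Pz_eval_trunc hp h5 (-(p:ℤ)) ⟨-1, by ring⟩
  rw [Pz_eval_neg_p hp hodd] at h
  have hdvd : ((p:ℤ)^3) ∣ (Pz p).coeff 1 * (p:ℤ) := by
    obtain ⟨z, hz⟩ := h
    exact ⟨z, by linarith [hz]⟩

  have hp0 : (p:ℤ) ≠ 0 := by positivity
  rw [pow_succ] at hdvd
  exact (mul_dvd_mul_iff_right hp0).mp hdvd

lemma key_congruence (hp : p.Prime) (h5 : 5 ≤ p) (a : ℕ) :
    (∏ r ∈ Finset.Ico 1 p, (a * p + r)) ≡ (p - 1).factorial [MOD p ^ 3] := by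
  have hcast : ((∏ r ∈ Finset.Ico 1 p, (a * p + r) : ℕ) : ℤ) = (Pz p).eval ((a : ℤ) * p) := by
    rw [Pz, Polynomial.eval_prod]
    push_cast
    exact Finset.prod_congr rfl fun r _ => by
      simp [Polynomial.eval_add]
  rw [Nat.ModEq.comm, Nat.modEq_iff_dvd]
  have hmod : ((p ^ 3 : ℕ) : ℤ) = (p:ℤ)^3 := by push_cast; ring
  rw [hmod, hcast]
  have h1 := Pz_eval_trunc hp h5 ((a:ℤ) * p) ⟨a, by ring⟩
  have h2 : ((p:ℤ)^3) ∣ (Pz p).coeff 1 * ((a:ℤ) * p) := by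
    obtain ⟨c, hc⟩ := Pz_coeff_one_dvd hp h5
    exact ⟨c * a, by rw [hc]; ring⟩
  obtain ⟨z1, hz1⟩ := h1
  obtain ⟨z2, hz2⟩ := h2
  exact ⟨z1 + z2, by linarith⟩

end LjunggrenAux

theorem ljunggren (p : ℕ) (hp : p.Prime) (h5 : 5 ≤ p) (n m : ℕ)
    (hn : 0 < n) (hm : 0 < m) (hmn : m ≤ n) :
    Nat.choose (n * p) (m * p) ≡ Nat.choose n m [MOD p ^ 3] := by
  have hp0 : 0 < p := hp.pos
  set W := (p - 1).factorial with hW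
  set G : ℕ → ℕ := fun k => ∏ i ∈ Finset.range k, ∏ r ∈ Finset.Ico 1 p, (i * p + r) with hG
  have hkey : ∀ k, G k ≡ W ^ k [MOD p ^ 3] := by
    intro k
    induction k with
    | zero => rfl
    | succ k ih =>
      have h1 : G (k + 1) = G k * ∏ r ∈ Finset.Ico 1 p, (k * p + r) := by
        rw [hG]; exact Finset.prod_range_succ _ _
      rw [h1, pow_succ]
      exact ih.mul (LjunggrenAux.key_congruence hp h5 k)
  have hfact : ∀ k : ℕ, (k * p).factorial = p ^ k * k.factorial * G k :=
    fun k => LjunggrenAux.factorial_mul_eq hp0 k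
  set C := Nat.choose (n * p) (m * p) with hC
  have hmple : m * p ≤ n * p := Nat.mul_le_mul_right p hmn
  have hE : C * (m * p).factorial * ((n - m) * p).factorial = (n * p).factorial := by
    rw [Nat.sub_mul]
    exact Nat.choose_mul_factorial_mul_factorial hmple
  have hpow : p ^ m * p ^ (n - m) = p ^ n := by rw [← pow_add]; congr 1; omega
  have h1 : p ^ n * (n.factorial * G n)
      = p ^ n * (C * (m.factorial * G m * ((n - m).factorial * G (n - m)))) := by
    calc p ^ n * (n.factorial * G n) = (n * p).factorial := by rw [hfact n]; ring
      _ = C * (m * p).factorial * ((n - m) * p).factorial := hE.symm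
      _ = C * (p ^ m * m.factorial * G m) * (p ^ (n - m) * (n - m).factorial * G (n - m)) := by
          rw [hfact m, hfact (n - m)]
      _ = (p ^ m * p ^ (n - m)) * (C * (m.factorial * G m * ((n - m).factorial * G (n - m)))) := by
          ring
      _ = p ^ n * (C * (m.factorial * G m * ((n - m).factorial * G (n - m)))) := by rw [hpow]
  have h2 : n.factorial * G n = C * (m.factorial * G m * ((n - m).factorial * G (n - m))) :=
    Nat.eq_of_mul_eq_mul_left (by positivity) h1
  have h3 := Nat.choose_mul_factorial_mul_factorial hmn
  have h4 : (m.factorial * (n - m).factorial) * (Nat.choose n m * G n)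
      = (m.factorial * (n - m).factorial) * (C * (G m * G (n - m))) := by
    calc (m.factorial * (n - m).factorial) * (Nat.choose n m * G n)
        = (Nat.choose n m * m.factorial * (n - m).factorial) * G n := by ring
      _ = n.factorial * G n := by rw [h3]
      _ = C * (m.factorial * G m * ((n - m).factorial * G (n - m))) := h2
      _ = (m.factorial * (n - m).factorial) * (C * (G m * G (n - m))) := by ring
  have h5' : Nat.choose n m * G n = C * (G m * G (n - m)) :=
    Nat.eq_of_mul_eq_mul_left (by positivity) h4
  have hpW : Nat.Coprime p W := by
    rw [Nat.Prime.coprime_iff_not_dvd hp]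
    intro hd
    have := (Nat.Prime.dvd_factorial hp).mp hd
    omega
  have hcop : Nat.Coprime (p ^ 3) (W ^ n) := Nat.Coprime.pow 3 n hpW
  have e1 : W ^ m * W ^ (n - m) = W ^ n := by rw [← pow_add]; congr 1; omega
  have chain : C * W ^ n ≡ Nat.choose n m * W ^ n [MOD p ^ 3] := by
    calc C * W ^ n = C * (W ^ m * W ^ (n - m)) := by rw [e1]
      _ ≡ C * (G m * G (n - m)) [MOD p ^ 3] :=
          Nat.ModEq.mul_left C (((hkey m).mul (hkey (n - m))).symm)
      _ = Nat.choose n m * G n := h5'.symm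
      _ ≡ Nat.choose n m * W ^ n [MOD p ^ 3] := Nat.ModEq.mul_left _ (hkey n)
  exact Nat.ModEq.cancel_right_of_coprime hcop chain
end

section
/- For every integer k ≥ 2, 2^{3k} divides C(2^{k+1}, 2^k) − C(2^k, 2^{k−1}), but 2^{3k+1} does not divide it. -/
/-!
Write `m = 2 ^ n`, `B` for the product of the odd numbers below `2m` and `A` for the product of
the odd numbers between `2m` and `4m`. Then `C(4m, 2m) * B = C(2m, m) * A`, and `C(2m, m)` is
exactly divisible by `2` (Kummer), so everything reduces to `v₂(A - B) = 3n + 2`.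

Pairing `2m + a` with `2m - a` gives `A * B = ∏ (a² - 4m²) ≡ B² - 4m² e (mod 16m⁴)`, where
`e = ∑ᵢ ∏_{j ≠ i} aⱼ²`. Modulo `2m` the odd numbers `a < 2m` are exactly the units, and inversion
permutes them, so `e ≡ B² ∑ a⁻² = B² ∑ a² ≡ m (mod 2m)`. Hence `(A - B) * B ≡ 4m³ (mod 8m³)`.
-/

open Finset Nat

lemma factorial_two_mul_eq (n : ℕ) : (2 * n)! = 2 ^ n * n ! * ∏ i ∈ range n, (2 * i + 1) := by
  induction n with
  | zero => simp
  | succ n ih =>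
    rw [show 2 * (n + 1) = 2 * n + 1 + 1 by ring, factorial_succ, factorial_succ, ih,
      factorial_succ, prod_range_succ]
    ring

lemma choose_two_mul_mul_factorial (n : ℕ) :
    (2 * n).choose n * n ! = 2 ^ n * ∏ i ∈ range n, (2 * i + 1) := by
  have h := choose_mul_factorial_mul_factorial (show n ≤ 2 * n by omega)
  rw [show 2 * n - n = n by omega, factorial_two_mul_eq] at h
  apply Nat.eq_of_mul_eq_mul_right (factorial_pos n)
  rw [h]
  ring

lemma prod_range_two_mul_odd (n : ℕ) :
    ∏ i ∈ range (2 * n), (2 * i + 1) =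
      (∏ i ∈ range n, (2 * i + 1)) * ∏ i ∈ range n, (2 * n + (2 * i + 1)) := by
  rw [two_mul n, prod_range_add]
  congr 1
  exact prod_congr rfl fun i _ => by ring

lemma choose_four_mul_mul_prod_odd (n : ℕ) :
    (4 * n).choose (2 * n) * ∏ i ∈ range n, (2 * i + 1) =
      (2 * n).choose n * ∏ i ∈ range n, (2 * n + (2 * i + 1)) := by
  set B := ∏ i ∈ range n, (2 * i + 1)
  set A := ∏ i ∈ range n, (2 * n + (2 * i + 1))
  have h4 := choose_two_mul_mul_factorial (2 * n)
  rw [show 2 * (2 * n) = 4 * n by ring, factorial_two_mul_eq, prod_range_two_mul_odd] at h4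
  apply Nat.eq_of_mul_eq_mul_right (show 0 < 2 ^ n * n ! * B by positivity)
  calc _ = (4 * n).choose (2 * n) * (2 ^ n * n ! * B) * B := by ring
    _ = ((2 * n).choose n * n !) * (2 ^ n * A * B) := by
      rw [h4, choose_two_mul_mul_factorial]
      ring
    _ = _ := by ring

lemma prod_range_two_mul_sub_odd (N : ℕ) :
    ∏ i ∈ range N, ((2 * N : ℤ) - (2 * i + 1)) = ∏ i ∈ range N, (2 * i + 1 : ℤ) := by
  refine Eq.trans ?_ (prod_range_reflect (fun i : ℕ => (2 * i + 1 : ℤ)) N)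
  refine prod_congr rfl fun i hi => ?_
  rw [mem_range] at hi
  rw [Nat.sub_sub, Nat.cast_sub (by omega)]
  push_cast
  ring

lemma prod_add_odd_mul_prod_odd {N : ℕ} (hN : Even N) :
    (∏ i ∈ range N, ((2 * N : ℤ) + (2 * i + 1))) * ∏ i ∈ range N, (2 * i + 1 : ℤ) =
      ∏ i ∈ range N, ((2 * i + 1 : ℤ) ^ 2 - (2 * N) ^ 2) := by
  rw [← prod_range_two_mul_sub_odd, ← prod_mul_distrib]
  calc _ = ∏ i ∈ range N, (-1 : ℤ) * ((2 * i + 1) ^ 2 - (2 * N) ^ 2) :=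
        prod_congr rfl fun i _ => by ring
    _ = _ := by rw [prod_mul_distrib, prod_const, card_range, hN.neg_one_pow, one_mul]

lemma sq_dvd_prod_sub_sub {ι R : Type*} [CommRing R] [DecidableEq ι] (s : Finset ι)
    (x : ι → R) (d : R) :
    d ^ 2 ∣ ∏ i ∈ s, (x i - d) - (∏ i ∈ s, x i - d * ∑ i ∈ s, ∏ j ∈ s.erase i, x j) := by
  induction s using Finset.induction_on with
  | empty => simp
  | insert a s ha ih =>
    obtain ⟨g, hg⟩ := ih
    have herase : ∀ i ∈ s, ∏ j ∈ (insert a s).erase i, x j = x a * ∏ j ∈ s.erase i, x j :=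
      fun i hi => by
        rw [erase_insert_of_ne (ne_of_mem_of_not_mem hi ha).symm,
          prod_insert fun h => ha (mem_of_mem_erase h)]
    rw [prod_insert ha, prod_insert ha, sum_insert ha, erase_insert ha, sum_congr rfl herase,
      ← mul_sum]
    exact ⟨(x a - d) * g + ∑ i ∈ s, ∏ j ∈ s.erase i, x j, by linear_combination (x a - d) * hg⟩

lemma three_mul_sum_range_odd_sq (N : ℕ) :
    3 * ∑ i ∈ range N, (2 * i + 1 : ℤ) ^ 2 = N * (4 * N ^ 2 - 1) := by
  induction N with
  | zero => simp
  | succ N ih =>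
    rw [sum_range_succ, mul_add, ih]
    push_cast
    ring

lemma sum_range_two_pow_odd_sq_modEq (n : ℕ) :
    ∑ i ∈ range (2 ^ n), (2 * i + 1 : ℤ) ^ 2 ≡ 2 ^ n [ZMOD 2 ^ (n + 1)] := by
  have h := three_mul_sum_range_odd_sq (2 ^ n)
  push_cast at h
  have hcop : IsCoprime ((2 : ℤ) ^ (n + 1)) 3 := IsCoprime.pow_left ⟨-1, 1, by norm_num⟩
  -- `3 * (∑ - m) = 4m (m² - 1)` where `m = 2 ^ n`
  refine (Int.modEq_iff_dvd.mpr (hcop.dvd_of_dvd_mul_left ⟨2 * ((2 ^ n) ^ 2 - 1), ?_⟩)).symm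
  linear_combination h

lemma sum_units_zmod_two_pow {M : Type*} [AddCommMonoid M] (n : ℕ) (f : ZMod (2 ^ (n + 1)) → M) :
    ∑ u : (ZMod (2 ^ (n + 1)))ˣ, f u = ∑ i ∈ range (2 ^ n), f (2 * i + 1) := by
  have hcop (i : ℕ) : Nat.Coprime (2 * i + 1) (2 ^ (n + 1)) :=
    .pow_right _ (coprime_two_right.mpr (odd_two_mul_add_one i))
  let toUnit : Fin (2 ^ n) → (ZMod (2 ^ (n + 1)))ˣ := fun i => ZMod.unitOfCoprime _ (hcop i)
  have htoUnit : Function.Bijective toUnit := by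
    rw [Fintype.bijective_iff_injective_and_card, ZMod.card_units_eq_totient,
      totient_prime_pow_succ prime_two, Fintype.card_fin]
    refine ⟨fun i j hij => Fin.ext ?_, by simp⟩
    have h := congrArg Units.val hij
    simp only [toUnit, ZMod.coe_unitOfCoprime, ZMod.natCast_eq_natCast_iff'] at h
    rw [Nat.mod_eq_of_lt, Nat.mod_eq_of_lt] at h <;> grind
  rw [← Fintype.sum_bijective toUnit htoUnit (fun i => f (toUnit i)) (fun u => f u) fun _ => rfl,
    sum_range]
  simp [toUnit]

lemma sum_prod_erase_odd_sq_modEq (n : ℕ) :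
    ∑ i ∈ range (2 ^ n), ∏ j ∈ (range (2 ^ n)).erase i, (2 * j + 1 : ℤ) ^ 2 ≡
      2 ^ n [ZMOD 2 ^ (n + 1)] := by
  have hmod : (((2 ^ (n + 1) : ℕ) : ℤ)) = 2 ^ (n + 1) := by push_cast; rfl
  rw [← hmod, ← ZMod.intCast_eq_intCast_iff]
  push_cast
  set x : ℕ → ZMod (2 ^ (n + 1)) := fun i => 2 * i + 1
  have hunit (i : ℕ) : IsUnit (x i) := by
    simpa [x] using (ZMod.isUnit_iff_coprime (2 * i + 1) (2 ^ (n + 1))).mpr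
      (.pow_right _ (coprime_two_right.mpr (odd_two_mul_add_one i)))
  have hfix (i : ℕ) : x i * 2 ^ n = 2 ^ n := by
    have h0 : (2 : ZMod (2 ^ (n + 1))) ^ (n + 1) = 0 := by
      exact_mod_cast ZMod.natCast_self (2 ^ (n + 1))
    linear_combination (i : ZMod (2 ^ (n + 1))) * h0
  have hsq := (ZMod.intCast_eq_intCast_iff _ _ _).mpr (hmod ▸ sum_range_two_pow_odd_sq_modEq n)
  push_cast at hsq
  set P := ∏ j ∈ range (2 ^ n), x j ^ 2
  have herase : ∀ i ∈ range (2 ^ n), ∏ j ∈ (range (2 ^ n)).erase i, x j ^ 2 = P * (x i)⁻¹ ^ 2 :=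
    fun i hi => by
      rw [show P = _ from (prod_erase_mul _ (fun j => x j ^ 2) hi).symm, mul_assoc, ← mul_pow,
        ZMod.mul_inv_of_unit _ (hunit i), one_pow, mul_one]
  have hP : P * 2 ^ n = 2 ^ n :=
    prod_induction _ (fun y => y * 2 ^ n = 2 ^ n)
      (fun a b ha hb => by rw [mul_assoc, hb, ha]) (one_mul _)
      fun i _ => by rw [sq, mul_assoc, hfix, hfix]
  calc ∑ i ∈ range (2 ^ n), ∏ j ∈ (range (2 ^ n)).erase i, x j ^ 2
      = P * ∑ i ∈ range (2 ^ n), (x i)⁻¹ ^ 2 := by rw [sum_congr rfl herase, mul_sum]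
    _ = P * ∑ u : (ZMod (2 ^ (n + 1)))ˣ, (u : ZMod (2 ^ (n + 1)))⁻¹ ^ 2 := by
      rw [sum_units_zmod_two_pow n fun y => y⁻¹ ^ 2]
    _ = P * ∑ u : (ZMod (2 ^ (n + 1)))ˣ, (u : ZMod (2 ^ (n + 1))) ^ 2 := by
      rw [Fintype.sum_equiv (Equiv.inv (ZMod (2 ^ (n + 1)))ˣ)
        (fun u => (u : ZMod (2 ^ (n + 1)))⁻¹ ^ 2) (fun u => (u : ZMod (2 ^ (n + 1))) ^ 2)
        fun u => by simp [ZMod.inv_coe_unit]]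
    _ = 2 ^ n := by rw [sum_units_zmod_two_pow n fun y => y ^ 2, hsq, hP]

lemma emultiplicity_two_eq_zero_of_odd {u : ℤ} (hu : Odd u) : emultiplicity 2 u = 0 :=
  emultiplicity_eq_zero.mpr fun h => Int.not_even_iff_odd.mpr hu (even_iff_two_dvd.mpr h)

lemma emultiplicity_two_mul_odd (x : ℤ) {u : ℤ} (hu : Odd u) :
    emultiplicity 2 (x * u) = emultiplicity 2 x := by
  rw [emultiplicity_mul Int.prime_two, emultiplicity_two_eq_zero_of_odd hu, add_zero]

lemma odd_prod_range_odd (N : ℕ) : Odd (∏ i ∈ range N, (2 * i + 1 : ℤ)) :=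
  prod_induction _ Odd (fun _ _ => Odd.mul) odd_one fun i _ => by simp

lemma emultiplicity_prod_add_odd_sub_prod_odd {n : ℕ} (hn : 1 ≤ n) :
    emultiplicity 2 (∏ i ∈ range (2 ^ n), ((2 ^ (n + 1) : ℤ) + (2 * i + 1)) -
      ∏ i ∈ range (2 ^ n), (2 * i + 1 : ℤ)) = (3 * n + 2 : ℕ) := by
  set A := ∏ i ∈ range (2 ^ n), ((2 ^ (n + 1) : ℤ) + (2 * i + 1))
  set B := ∏ i ∈ range (2 ^ n), (2 * i + 1 : ℤ)
  have hAB := prod_add_odd_mul_prod_odd (N := 2 ^ n) ((Nat.even_pow' (by omega)).mpr even_two)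
  rw [show (2 : ℤ) * ((2 ^ n : ℕ) : ℤ) = 2 ^ (n + 1) by push_cast; ring] at hAB
  obtain ⟨g, hg⟩ := sq_dvd_prod_sub_sub (range (2 ^ n)) (fun i => (2 * i + 1 : ℤ) ^ 2)
    ((2 ^ (n + 1)) ^ 2)
  obtain ⟨t, ht⟩ := (sum_prod_erase_odd_sq_modEq n).dvd
  have hB2 : ∏ i ∈ range (2 ^ n), (2 * i + 1 : ℤ) ^ 2 = B ^ 2 := prod_pow _ _ _
  have key : (A - B) * B = 2 ^ (3 * n + 2) * (2 * (t + 2 ^ (n + 1) * g - 1) + 1) := by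
    linear_combination hAB + hg + hB2 + (2 ^ (n + 1)) ^ 2 * ht
  rw [← emultiplicity_two_mul_odd _ (odd_prod_range_odd _), key,
    emultiplicity_two_mul_odd _ (odd_two_mul_add_one _),
    emultiplicity_pow_self_of_prime Int.prime_two]

lemma emultiplicity_two_choose_two_pow_succ (n : ℕ) :
    emultiplicity 2 ((2 ^ (n + 1)).choose (2 ^ n)) = 1 := by
  rw [prime_two.emultiplicity_choose_prime_pow (pow_le_pow_right₀ one_le_two n.le_succ)
    (pow_ne_zero n two_ne_zero), multiplicity_pow_self_of_prime prime_two.prime]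
  simp

lemma emultiplicity_two_choose_sub_choose {n : ℕ} (hn : 1 ≤ n) :
    emultiplicity 2 (((2 ^ (n + 2)).choose (2 ^ (n + 1)) : ℤ) - (2 ^ (n + 1)).choose (2 ^ n)) =
      (3 * n + 3 : ℕ) := by
  have h := choose_four_mul_mul_prod_odd (2 ^ n)
  rw [show 4 * 2 ^ n = 2 ^ (n + 2) by ring, show 2 * 2 ^ n = 2 ^ (n + 1) by ring] at h
  have hZ := congrArg (fun m : ℕ => (m : ℤ)) h
  push_cast at hZ
  have hcentral : emultiplicity (2 : ℤ) ((2 ^ (n + 1)).choose (2 ^ n) : ℕ) = 1 := by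
    exact_mod_cast (Int.natCast_emultiplicity 2 _).trans (emultiplicity_two_choose_two_pow_succ n)
  rw [← emultiplicity_two_mul_odd _ (odd_prod_range_odd (2 ^ n)), sub_mul, hZ, ← mul_sub,
    emultiplicity_mul Int.prime_two, hcentral, emultiplicity_prod_add_odd_sub_prod_odd hn]
  push_cast
  ring

theorem imo2006_N4 (k : ℕ) (hk : 2 ≤ k) :
    (2 : ℤ) ^ (3 * k) ∣
      ((Nat.choose (2 ^ (k + 1)) (2 ^ k) : ℤ) - (Nat.choose (2 ^ k) (2 ^ (k - 1)) : ℤ)) ∧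
    ¬ (2 : ℤ) ^ (3 * k + 1) ∣
      ((Nat.choose (2 ^ (k + 1)) (2 ^ k) : ℤ) - (Nat.choose (2 ^ k) (2 ^ (k - 1)) : ℤ)) := by
  obtain ⟨n, rfl⟩ : ∃ n, k = n + 1 := ⟨k - 1, by omega⟩
  rw [← emultiplicity_eq_coe, add_tsub_cancel_right,
    emultiplicity_two_choose_sub_choose (by omega)]
  ring_nf
end

section
/- If p is a prime, n and r are nonnegative integers, and s is a positive integer with 1 ≤ s < p, then C(np, rp + s) ≡ (r+1) · C(n, r+1) · C(p, s) (mod p^2). -/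
/-!
Write `N = n p` and `k = r p + s`. The absorption identity `k C(N, k) = N C(N - 1, k - 1)` and
Lucas's theorem `C(N - 1, k - 1) ≡ C(p - 1, s - 1) C(n - 1, r) (mod p)` give, after multiplying by
`N`, which is divisible by `p`, a congruence modulo `p²`:
`k C(N, k) ≡ n p C(n - 1, r) C(p - 1, s - 1) = s (r + 1) C(n, r + 1) C(p, s)`.
Since `p ∣ C(N, k)` and `k ≡ s (mod p)`, the factor `k` may be replaced by `s`, which is a unit
modulo `p²`.
-/

theorem Nat.mul_choose_eq_mul_choose_sub_one {n k : ℕ} (hk : 0 < k) :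
    k * n.choose k = n * (n - 1).choose (k - 1) := by
  obtain ⟨k, rfl⟩ := Nat.exists_eq_add_of_lt hk
  cases n with
  | zero => simp
  | succ n => simpa [mul_comm] using (Nat.add_one_mul_choose_eq n k).symm

theorem Nat.ModEq.mul_right_of_dvd {n a b x : ℕ} (h : a ≡ b [MOD n]) (hx : n ∣ x) :
    a * x ≡ b * x [MOD n ^ 2] :=
  (h.mul_right' x).of_dvd (by rw [sq]; exact mul_dvd_mul_left n hx)

namespace Nat.Prime

theorem choose_mul_add_mul_add_modEq {p : ℕ} (hp : p.Prime) (n k : ℕ) {a b : ℕ}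
    (ha : a < p) (hb : b < p) :
    (n * p + a).choose (k * p + b) ≡ a.choose b * n.choose k [MOD p] := by
  have : Fact p.Prime := ⟨hp⟩
  have hdiv {c x : ℕ} (hx : x < p) : (c * p + x) / p = c := by
    rw [add_comm, Nat.add_mul_div_right _ _ hp.pos, Nat.div_eq_of_lt hx, zero_add]
  simpa [Nat.mul_add_mod_of_lt, Nat.mod_eq_of_lt, ha, hb, hdiv] using
    Choose.choose_modEq_choose_mod_mul_choose_div_nat (n := n * p + a) (k := k * p + b) (p := p)

theorem dvd_choose_mul_of_not_dvd {p : ℕ} (hp : p.Prime) (n : ℕ) {k : ℕ} (hk : ¬ p ∣ k) :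
    p ∣ (n * p).choose k := by
  have : Fact p.Prime := ⟨hp⟩
  have hmod : 0 < k % p := Nat.pos_of_ne_zero fun h => hk (Nat.dvd_of_mod_eq_zero h)
  have := Choose.choose_modEq_choose_mod_mul_choose_div_nat (n := n * p) (k := k) (p := p)
  rw [Nat.mul_mod_left, Nat.choose_eq_zero_of_lt hmod, zero_mul] at this
  exact Nat.dvd_of_mod_eq_zero this

theorem mul_choose_mul_add_modEq {p : ℕ} (hp : p.Prime) (m r : ℕ) {s : ℕ}
    (hs1 : 1 ≤ s) (hs2 : s < p) :
    (r * p + s) * ((m + 1) * p).choose (r * p + s) ≡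
      s * ((r + 1) * (m + 1).choose (r + 1) * p.choose s) [MOD p ^ 2] := by
  have hN : (m + 1) * p - 1 = m * p + (p - 1) := by rw [Nat.succ_mul]; omega
  have hK : r * p + s - 1 = r * p + (s - 1) := by omega
  have hlucas := (hp.choose_mul_add_mul_add_modEq m r (Nat.sub_lt hp.pos one_pos)
    (by omega : s - 1 < p)).mul_left' ((m + 1) * p)
  rw [mul_assoc, ← sq] at hlucas
  have habs_n := Nat.mul_choose_eq_mul_choose_sub_one (n := m + 1) (k := r + 1) (by omega)
  have habs_p := Nat.mul_choose_eq_mul_choose_sub_one (n := p) (k := s) (by omega)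
  simp only [Nat.add_sub_cancel] at habs_n
  calc (r * p + s) * ((m + 1) * p).choose (r * p + s)
      = (m + 1) * p * (m * p + (p - 1)).choose (r * p + (s - 1)) := by
        rw [Nat.mul_choose_eq_mul_choose_sub_one (by omega), hN, hK]
    _ ≡ (m + 1) * p * ((p - 1).choose (s - 1) * m.choose r) [MOD p ^ 2] :=
        hlucas.of_mul_left (m + 1)
    _ = s * ((r + 1) * (m + 1).choose (r + 1) * p.choose s) := by
        rw [show s * ((r + 1) * (m + 1).choose (r + 1) * p.choose s)
          = (r + 1) * (m + 1).choose (r + 1) * (s * p.choose s) by ring, habs_n, habs_p]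
        ring

end Nat.Prime

theorem bailey_1991 (p : ℕ) (hp : p.Prime) (n r s : ℕ) (hs1 : 1 ≤ s) (hs2 : s < p) :
    Nat.choose (n * p) (r * p + s) ≡
      (r + 1) * Nat.choose n (r + 1) * Nat.choose p s [MOD p ^ 2] := by
  obtain _ | m := n
  · simp [Nat.choose_eq_zero_of_lt, show 0 < r * p + s by omega, Nat.ModEq.refl]
  have hs : ¬ p ∣ s := Nat.not_dvd_of_pos_of_lt hs1 hs2
  have hk : ¬ p ∣ r * p + s := fun h => hs ((Nat.dvd_add_right (dvd_mul_left p r)).mp h)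
  have hshift : (r * p + s) * ((m + 1) * p).choose (r * p + s) ≡
      s * ((m + 1) * p).choose (r * p + s) [MOD p ^ 2] :=
    Nat.ModEq.mul_right_of_dvd (by simp [Nat.ModEq]) (hp.dvd_choose_mul_of_not_dvd (m + 1) hk)
  exact Nat.ModEq.cancel_left_of_coprime ((hp.coprime_iff_not_dvd.mpr hs).pow_left 2)
    (hshift.symm.trans (hp.mul_choose_mul_add_modEq m r hs1 hs2))
end

section
/- If p is a prime and n, m, n_0, m_0 are nonnegative integers with n_0 < p and m_0 < p, then C(n·p^2 + n_0, m·p^2 + m_0) ≡ C(n, m) · C(n_0, m_0) (mod p^2). -/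
open Polynomial Finset

lemma sq_zero_add_pow {R : Type*} [CommRing R] (a b : R) (hb : b * b = 0) (n : ℕ) :
    (a + b) ^ n = a ^ n + (n : R) * a ^ (n - 1) * b := by
  cases n with
  | zero => simp
  | succ k =>
    induction k with
    | zero => simp [pow_succ]
    | succ j ih =>
      rw [pow_succ, ih]
      push_cast
      simp only [Nat.add_sub_cancel] at *
      linear_combination (((j : R) + 1) * a ^ j) * hb

lemma key2 {R : Type*} [CommRing R] {c u v S : R} (hc : c * c = 0) (h : u = v + c * S)
    (n : ℕ) : u ^ n = v ^ n + c * ((n : R) * v ^ (n - 1) * S) := by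
  rw [h, sq_zero_add_pow _ _ (by linear_combination (S * S) * hc) n]
  ring

lemma key1 {R : Type*} [CommRing R] {p : ℕ} {u v S : R} (hc : (p : R) * (p : R) = 0)
    (h : u = v + (p : R) * S) : u ^ p = v ^ p := by
  rw [key2 hc h p]
  linear_combination (v ^ (p - 1) * S) * hc

lemma expand_prime {R : Type*} [CommRing R] {p : ℕ} (hp : p.Prime) (Y : R[X]) :
    (Y + 1) ^ p = Y ^ p + 1 + (p : R[X]) *
      ∑ k ∈ Ioo 0 p, ((p.choose k / p : ℕ) : R[X]) * Y ^ k := by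
  rw [add_pow]
  simp only [one_pow, mul_one]
  rw [Finset.sum_range_succ, Nat.choose_self, Nat.cast_one, mul_one,
    Finset.range_eq_Ico, ← Finset.Ioo_insert_left hp.pos,
    Finset.sum_insert (by simp)]
  rw [Finset.mul_sum]
  have : ∀ k ∈ Ioo 0 p, (p : R[X]) * (((p.choose k / p : ℕ) : R[X]) * Y ^ k)
      = Y ^ k * (p.choose k : R[X]) := by
    intro k hk
    simp only [mem_Ioo] at hk
    rw [← mul_assoc, ← Nat.cast_mul,
      Nat.mul_div_cancel' (hp.dvd_choose_self (by omega) hk.2), mul_comm]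
  rw [Finset.sum_congr rfl this]
  simp [Nat.choose_zero_right]
  ring

lemma coeff_aux {R : Type*} [CommRing R] (q n₀ a t : ℕ) :
    (((X:R[X])^q + 1)^a * (X+1)^n₀).coeff t
      = ∑ j ∈ range (a+1), (a.choose j : R) *
          (if q*j ≤ t then (n₀.choose (t - q*j) : R) else 0) := by
  rw [add_pow]
  simp only [one_pow, mul_one, ← pow_mul]
  rw [Finset.sum_mul, Polynomial.finset_sum_coeff]
  refine Finset.sum_congr rfl fun j hj => ?_
  rw [show (X:R[X])^(q*j) * (a.choose j : R[X]) * (X+1)^n₀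
      = C ((a.choose j : R)) * ((X+1)^n₀ * X^(q*j)) by rw [C_eq_natCast]; ring,
    coeff_C_mul, coeff_mul_X_pow']
  congr 1
  split_ifs with h
  · rw [coeff_X_add_one_pow]
  · rfl

theorem bailey_1990_sq (p : ℕ) (hp : p.Prime) (n m n₀ m₀ : ℕ)
    (hn₀ : n₀ < p) (hm₀ : m₀ < p) :
    Nat.choose (n * p ^ 2 + n₀) (m * p ^ 2 + m₀) ≡
      Nat.choose n m * Nat.choose n₀ m₀ [MOD p ^ 2] := by
  have hp2 : 2 ≤ p := hp.two_le
  have hppn : p ≤ p * p := Nat.le_mul_of_pos_left p (by omega)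
  have hpsq : p * p = p ^ 2 := by ring
  have hpp : ((p : (ZMod (p^2))[X]) * (p : (ZMod (p^2))[X])) = 0 := by
    rw [← Nat.cast_mul, ← pow_two, ← map_natCast (C : ZMod (p^2) →+* (ZMod (p^2))[X]),
      ZMod.natCast_self, map_zero]
  -- Step 1 : (X+1)^(p^2) = X^(p^2)+1 + p * E
  have he2 := expand_prime hp ((X : (ZMod (p^2))[X])^p)
  rw [← pow_mul, hpsq] at he2
  have h2 : ((X : (ZMod (p^2))[X]) + 1) ^ (p^2)
      = X^(p^2) + 1 + (p : (ZMod (p^2))[X]) *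
        ∑ k ∈ Ioo 0 p, ((p.choose k / p : ℕ) : (ZMod (p^2))[X]) * ((X:(ZMod (p^2))[X])^p) ^ k := by
    refine Eq.trans ?_ he2
    have e : ((X : (ZMod (p^2))[X]) + 1) ^ (p^2) = (((X : (ZMod (p^2))[X]) + 1) ^ p) ^ p :=
      (congrArg (fun t => ((X : (ZMod (p^2))[X]) + 1) ^ t) (pow_two p)).trans (pow_mul _ p p)
    exact e.trans (key1 hpp (expand_prime hp X))
  -- Step 2 : full expansion of (X+1)^(n p² + n₀)
  have h4 : ((X : (ZMod (p^2))[X]) + 1) ^ (n * p^2 + n₀)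
      = ((X:(ZMod (p^2))[X])^(p^2) + 1)^n * (X + 1)^n₀
        + ∑ k ∈ Ioo 0 p, ((p * n * (p.choose k / p) : ℕ) : (ZMod (p^2))[X])
            * ((((X:(ZMod (p^2))[X])^(p^2) + 1)^(n-1) * (X + 1)^n₀) * X^(p*k)) := by
    rw [pow_add, mul_comm n (p^2), pow_mul, key2 hpp h2 n, add_mul]
    congr 1
    rw [Finset.mul_sum, Finset.mul_sum, Finset.sum_mul]
    refine Finset.sum_congr rfl fun k hk => ?_
    push_cast
    rw [← pow_mul]
    ring
  -- coefficient of the correction terms vanishes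
  have hcor : ∀ k ∈ Ioo 0 p,
      (((p * n * (p.choose k / p) : ℕ) : (ZMod (p^2))[X])
        * ((((X:(ZMod (p^2))[X])^(p^2) + 1)^(n-1) * (X + 1)^n₀) * X^(p*k))).coeff (m * p ^ 2 + m₀) = 0 := by
    intro k hk
    simp only [mem_Ioo] at hk
    have hpk : p ≤ p * k := Nat.le_mul_of_pos_right p hk.1
    have hpk2 : p * k + p ≤ p * p := by
      calc p * k + p = p * (k+1) := by ring
        _ ≤ p * p := Nat.mul_le_mul_left p (by omega)
    rw [← C_eq_natCast, coeff_C_mul, coeff_mul_X_pow']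
    split_ifs with hle
    · rw [coeff_aux]
      rw [Finset.sum_eq_zero, mul_zero]
      intro j hj
      -- arithmetic: the inner binomial coefficient is zero
      have hm1 : 1 ≤ m := by
        rcases Nat.eq_zero_or_pos m with h | h
        · exfalso; rw [h] at hle; simp at hle; omega
        · exact h
      have hA : p^2*(m-1) + p^2 = p^2*m := by
        have h' : m - 1 + 1 = m := by omega
        calc p^2*(m-1) + p^2 = p^2*((m-1)+1) := by ring
          _ = p^2*m := by rw [h']
      have hcm : p^2*m = m*p^2 := by ring
      rcases le_or_gt (p^2*j) (m * p ^ 2 + m₀ - p*k) with hj2 | hj2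
      · rw [if_pos hj2]
        rcases le_or_gt j (m-1) with hcase | hcase
        · have c1 : p^2*j ≤ p^2*(m-1) := Nat.mul_le_mul_left _ hcase
          have hz0 : n₀.choose (m * p ^ 2 + m₀ - p*k - p^2*j) = 0 :=
            Nat.choose_eq_zero_of_lt (by omega)
          rw [hz0, Nat.cast_zero, mul_zero]
        · have c1 : p^2*m ≤ p^2*j := Nat.mul_le_mul_left _ (by omega)
          exfalso; omega
      · rw [if_neg (by omega), mul_zero]
    · exact mul_zero _
  -- the main term gives the answer
  have hA : ∑ j ∈ range (n+1), (n.choose j : ZMod (p^2)) *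
      (if p^2*j ≤ m * p ^ 2 + m₀ then (n₀.choose (m * p ^ 2 + m₀ - p^2*j) : ZMod (p^2)) else 0)
      = ((n.choose m : ZMod (p^2)) * (n₀.choose m₀ : ZMod (p^2))) := by
    have hcm : ∀ b : ℕ, p^2*b = b*p^2 := fun b => by ring
    have hpsq' : p ≤ p^2 := by omega
    rw [Finset.sum_eq_single m]
    · have hc : p^2*m ≤ m * p ^ 2 + m₀ := by rw [hcm]; omega
      rw [if_pos hc, show m * p ^ 2 + m₀ - p^2*m = m₀ by rw [hcm]; omega]
    · intro b hb hbm
      rcases lt_or_gt_of_ne hbm with h | h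
      · have c1 : p^2*b + p^2 ≤ p^2*m := by
          have := Nat.mul_le_mul_left (p^2) (show b+1 ≤ m by omega)
          calc p^2*b + p^2 = p^2*(b+1) := by ring
            _ ≤ p^2*m := this
        have hc : p^2*b ≤ m * p ^ 2 + m₀ := by have := hcm m; omega
        have hz0 : n₀.choose (m * p ^ 2 + m₀ - p^2*b) = 0 :=
          Nat.choose_eq_zero_of_lt (by have := hcm m; omega)
        rw [if_pos hc, hz0, Nat.cast_zero, mul_zero]
      · have c1 : p^2*m + p^2 ≤ p^2*b := by
          have := Nat.mul_le_mul_left (p^2) (show m+1 ≤ b by omega)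
          calc p^2*m + p^2 = p^2*(m+1) := by ring
            _ ≤ p^2*b := this
        rw [if_neg (by have := hcm m; omega), mul_zero]
    · intro hm
      rw [Nat.choose_eq_zero_of_lt (by simp at hm; omega), Nat.cast_zero, zero_mul]
  -- assemble
  have h5 := congrFun (congrArg Polynomial.coeff h4) (m * p ^ 2 + m₀)
  rw [coeff_X_add_one_pow, coeff_add, coeff_aux, hA, Polynomial.finset_sum_coeff,
    Finset.sum_eq_zero hcor, add_zero, ← Nat.cast_mul] at h5
  exact (ZMod.natCast_eq_natCast_iff _ _ _).mp h5
end

section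
/- If p is a prime greater than 3 and n, m, n_0, m_0 are nonnegative integers with n_0 < p and m_0 < p, then C(n·p^3 + n_0, m·p^3 + m_0) ≡ C(n, m) · C(n_0, m_0) (mod p^3). -/
/-!
By Vandermonde, `C(np³ + n₀, mp³ + m₀) = ∑_{i+j = mp³+m₀} C(np³, i) C(n₀, j)`. When `p ∤ i`,
`p³ ∣ C(np³, i)`; when `p ∣ i` and `j ≤ n₀ < p`, reducing mod `p` forces `j = m₀`. So only
`C(np³, mp³) C(n₀, m₀)` survives, and it remains to prove Jacobsthal's congruence
`C(ap, bp) ≡ C(a, b) [MOD p³]`, applied three times.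

Write `(ap)! = a! pᵃ ∏_{i<a} Bᵢ` with `Bᵢ = ∏_{0<j<p} (ip + j)`. Pairing `j` with `p - j` gives
`(ip + j)(ip + p - j) = j(p - j) + p²(i² + i)`, and since `(p²(i² + i))² ≡ 0 [MOD p³]`,
`Bᵢ ≡ (p-1)! + p²(i² + i) ∑ⱼ ∏_{k≠j} k(p - k)`. As `k(p - k) ≡ -k² [MOD p]`, the last sum is
a multiple of `∑_{j ≤ p/2} j⁻²` mod `p`, which is half of `∑_{x ∈ 𝔽ₚ} x² = 0` (as `2 < p - 1`).
So `∏_{i<a} Bᵢ ≡ (p-1)!ᵃ`, a unit mod `p³`, and it cancels from the factorial formula for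
`C(ap, bp)`, leaving `C(a, b)`.
-/

open Finset Nat

namespace Finset

theorem prod_add_of_mul_self_eq_zero {ι R : Type*} [CommRing R] [DecidableEq ι] {y : R}
    (hy : y * y = 0) (s : Finset ι) (a : ι → R) :
    ∏ j ∈ s, (a j + y) = ∏ j ∈ s, a j + y * ∑ j ∈ s, ∏ k ∈ s.erase j, a k := by
  induction s using Finset.induction with
  | empty => simp
  | @insert i s hi ih =>
    have herase : ∀ j ∈ s, ∏ k ∈ (insert i s).erase j, a k = a i * ∏ k ∈ s.erase j, a k :=
      fun j hj => by
        rw [erase_insert_of_ne (ne_of_mem_of_not_mem hj hi).symm,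
          prod_insert (fun h => hi (mem_of_mem_erase h))]
    rw [prod_insert hi, ih, prod_insert hi, sum_insert hi, erase_insert hi,
      sum_congr rfl herase, ← mul_sum]
    linear_combination (∑ j ∈ s, ∏ k ∈ s.erase j, a k) * hy

theorem sum_prod_erase_eq_prod_mul_sum_inv {ι K : Type*} [Field K] [DecidableEq ι]
    {s : Finset ι} {a : ι → K} (ha : ∀ j ∈ s, a j ≠ 0) :
    ∑ j ∈ s, ∏ k ∈ s.erase j, a k = (∏ j ∈ s, a j) * ∑ j ∈ s, (a j)⁻¹ := by
  rw [mul_sum]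
  refine sum_congr rfl fun j hj => ?_
  rw [eq_mul_inv_iff_mul_eq₀ (ha j hj), prod_erase_mul s a hj]

theorem prod_Ico_one_eq_prod_Icc_mul_of_odd {M : Type*} [CommMonoid M] (f : ℕ → M) {N : ℕ}
    (hN : Odd N) : ∏ j ∈ Ico 1 N, f j = ∏ j ∈ Icc 1 (N / 2), f j * f (N - j) := by
  obtain ⟨h, rfl⟩ := hN
  have hhalf : (2 * h + 1) / 2 = h := by omega
  rw [hhalf, prod_mul_distrib, ← Ico_add_one_right_eq_Icc,
    ← prod_Ico_consecutive f (by omega : 1 ≤ h + 1) (by omega : h + 1 ≤ 2 * h + 1),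
    prod_Ico_reflect f 1 (by omega : h + 1 ≤ 2 * h + 1 + 1)]
  congr 3; omega

theorem sum_Ico_one_eq_sum_Icc_add_of_odd {M : Type*} [AddCommMonoid M] (f : ℕ → M) {N : ℕ}
    (hN : Odd N) : ∑ j ∈ Ico 1 N, f j = ∑ j ∈ Icc 1 (N / 2), (f j + f (N - j)) :=
  @prod_Ico_one_eq_prod_Icc_mul_of_odd (Multiplicative M) _ f N hN

end Finset

namespace ZMod

theorem natCast_ne_zero_of_pos_of_lt {n a : ℕ} (h0 : 0 < a) (h : a < n) : (a : ZMod n) ≠ 0 :=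
  (natCast_eq_zero_iff a n).not.mpr (Nat.not_dvd_of_pos_of_lt h0 h)

theorem natCast_sub_self {n a : ℕ} (h : a ≤ n) : ((n - a : ℕ) : ZMod n) = -a := by
  rw [Nat.cast_sub h, natCast_self, zero_sub]

theorem natCast_pow_self (p k : ℕ) : (p : ZMod (p ^ k)) ^ k = 0 := by
  exact_mod_cast natCast_self (p ^ k)

variable {p : ℕ} [Fact p.Prime]

theorem sum_inv_sq_eq_zero (hp3 : 3 < p) : ∑ x : ZMod p, (x⁻¹) ^ 2 = 0 :=
  (Equiv.sum_comp (Equiv.inv (ZMod p)) (· ^ 2)).trans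
    (FiniteField.sum_pow_lt_card_sub_one (K := ZMod p) 2 (by rw [card]; omega))

theorem sum_Icc_half_inv_sq_eq_zero (hp3 : 3 < p) :
    ∑ j ∈ Icc 1 (p / 2), ((j : ZMod p)⁻¹) ^ 2 = 0 := by
  have hp0 : 0 < p := by omega
  have hrange : ∑ j ∈ range p, ((j : ZMod p)⁻¹) ^ 2 = ∑ x : ZMod p, (x⁻¹) ^ 2 :=
    sum_nbij' (↑) val (fun _ _ => mem_univ _) (fun x _ => mem_range.mpr (val_lt x))
      (fun _ hj => val_cast_of_lt (mem_range.mp hj)) (fun x _ => natCast_zmod_val x)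
      (fun _ _ => rfl)
  have hIco : ∑ j ∈ Ico 1 p, ((j : ZMod p)⁻¹) ^ 2 = 0 := by
    rw [← sum_inv_sq_eq_zero hp3, ← hrange, range_eq_Ico, sum_eq_sum_Ico_succ_bot hp0]
    simp
  rw [sum_Ico_one_eq_sum_Icc_add_of_odd _ ((Fact.out : p.Prime).odd_of_ne_two (by omega))]
    at hIco
  have hreflect : ∀ j ∈ Icc 1 (p / 2),
      ((j : ZMod p)⁻¹) ^ 2 + (((p - j : ℕ) : ZMod p)⁻¹) ^ 2 = 2 * ((j : ZMod p)⁻¹) ^ 2 :=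
    fun j hj => by
      rw [natCast_sub_self (by grind), inv_neg, neg_sq, two_mul]
  rw [sum_congr rfl hreflect, ← mul_sum] at hIco
  exact (mul_eq_zero.mp hIco).resolve_left
    (by exact_mod_cast natCast_ne_zero_of_pos_of_lt two_pos (by omega : 2 < p))

end ZMod

theorem Int.prime_dvd_sum_prod_erase_Icc_half {p : ℕ} [Fact p.Prime] (hp3 : 3 < p) :
    (p : ℤ) ∣ ∑ j ∈ Icc 1 (p / 2), ∏ k ∈ (Icc 1 (p / 2)).erase j, ((k : ℤ) * (p - k)) := by
  rw [← ZMod.intCast_zmod_eq_zero_iff_dvd]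
  push_cast
  simp only [ZMod.natCast_self, zero_sub]
  have hne : ∀ k ∈ Icc 1 (p / 2), (k : ZMod p) * -k ≠ 0 := fun k hk => by
    have hk0 := ZMod.natCast_ne_zero_of_pos_of_lt (n := p) (by grind) (by grind : k < p)
    simpa using hk0
  have hinv : ∑ k ∈ Icc 1 (p / 2), ((k : ZMod p) * -k)⁻¹
      = -∑ k ∈ Icc 1 (p / 2), ((k : ZMod p)⁻¹) ^ 2 := by
    rw [← sum_neg_distrib]
    exact sum_congr rfl fun k _ => by ring
  rw [sum_prod_erase_eq_prod_mul_sum_inv hne, hinv, ZMod.sum_Icc_half_inv_sq_eq_zero hp3,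
    neg_zero, mul_zero]

namespace Nat

theorem prod_Ico_mul_add_modEq_factorial {p : ℕ} (hp : p.Prime) (hp3 : 3 < p) (i : ℕ) :
    ∏ j ∈ Ico 1 p, (i * p + j) ≡ (p - 1)! [MOD p ^ 3] := by
  have := Fact.mk hp
  have hodd : Odd p := hp.odd_of_ne_two (by omega)
  have hle : ∀ j ∈ Icc 1 (p / 2), j ≤ p := fun j hj => by grind
  set c : ZMod (p ^ 3) := ((i ^ 2 + i : ℕ) : ZMod (p ^ 3))
  set y : ZMod (p ^ 3) := (p : ZMod (p ^ 3)) ^ 2 * c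
  have hy : y * y = 0 := by
    rw [show y * y = (p : ZMod (p ^ 3)) ^ 3 * (p * c ^ 2) by simp only [y]; ring,
      ZMod.natCast_pow_self, zero_mul]
  have hpair : ∀ j ∈ Icc 1 (p / 2),
      ((i * p + j : ℕ) : ZMod (p ^ 3)) * ((i * p + (p - j) : ℕ) : ZMod (p ^ 3))
        = j * (p - j) + y := fun j hj => by
    push_cast [Nat.cast_sub (hle j hj), y, c]
    ring
  have hfactorial : ∏ j ∈ Icc 1 (p / 2), ((j : ZMod (p ^ 3)) * (p - j)) = ((p - 1)! : ℕ) := by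
    rw [← prod_Ico_id_eq_factorial, Nat.sub_add_cancel hp.one_le, Nat.cast_prod,
      prod_Ico_one_eq_prod_Icc_mul_of_odd _ hodd]
    exact prod_congr rfl fun j hj => by push_cast [Nat.cast_sub (hle j hj)]; rfl
  have hcross : y * ∑ j ∈ Icc 1 (p / 2), ∏ k ∈ (Icc 1 (p / 2)).erase j,
      ((k : ZMod (p ^ 3)) * (p - k)) = 0 := by
    obtain ⟨t, ht⟩ := Int.prime_dvd_sum_prod_erase_Icc_half hp3
    have hcast := congrArg (Int.cast : ℤ → ZMod (p ^ 3)) ht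
    push_cast at hcast
    rw [hcast, show y * (p * t) = (p : ZMod (p ^ 3)) ^ 3 * (c * t) by simp only [y]; ring,
      ZMod.natCast_pow_self, zero_mul]
  rw [← ZMod.natCast_eq_natCast_iff, Nat.cast_prod, prod_Ico_one_eq_prod_Icc_mul_of_odd _ hodd,
    prod_congr rfl hpair, prod_add_of_mul_self_eq_zero hy, hfactorial, hcross, add_zero]

def coprimeFactorial (p a : ℕ) : ℕ :=
  ∏ i ∈ range a, ∏ j ∈ Ico 1 p, (i * p + j)

theorem factorial_mul_eq_mul_coprimeFactorial {p : ℕ} (hp : 0 < p) (a : ℕ) :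
    (a * p)! = a ! * p ^ a * coprimeFactorial p a := by
  induction a with
  | zero => simp [coprimeFactorial]
  | succ a ih =>
    obtain ⟨q, rfl⟩ : ∃ q, p = q + 1 := ⟨p - 1, by omega⟩
    have hblock : (a * (q + 1) + 1).ascFactorial (q + 1)
        = (∏ j ∈ Ico 1 (q + 1), (a * (q + 1) + j)) * ((a + 1) * (q + 1)) := by
      rw [ascFactorial_eq_prod_range, prod_range_succ, prod_Ico_eq_prod_range,
        Nat.add_sub_cancel]
      congr 1
      · exact prod_congr rfl fun k _ => by ring
      · ring
    rw [show (a + 1) * (q + 1) = a * (q + 1) + (q + 1) by ring, ← factorial_mul_ascFactorial,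
      hblock, ih]
    simp only [coprimeFactorial, prod_range_succ, factorial_succ]
    ring

theorem choose_mul_mul_coprimeFactorial {p a b : ℕ} (hp : 0 < p) (hba : b ≤ a) :
    (a * p).choose (b * p) * (coprimeFactorial p b * coprimeFactorial p (a - b))
      = a.choose b * coprimeFactorial p a := by
  have hpos : 0 < b ! * (a - b)! * p ^ a := by positivity
  refine Nat.eq_of_mul_eq_mul_left hpos ?_
  have hchoose := choose_mul_factorial_mul_factorial (Nat.mul_le_mul_right p hba)
  rw [← Nat.sub_mul, factorial_mul_eq_mul_coprimeFactorial hp,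
    factorial_mul_eq_mul_coprimeFactorial hp, factorial_mul_eq_mul_coprimeFactorial hp,
    ← choose_mul_factorial_mul_factorial hba] at hchoose
  rw [← Nat.add_sub_cancel' hba, pow_add] at hchoose ⊢
  rw [Nat.add_sub_cancel_left] at hchoose ⊢
  linear_combination hchoose

theorem coprimeFactorial_modEq_pow {p M W : ℕ}
    (hblock : ∀ i, ∏ j ∈ Ico 1 p, (i * p + j) ≡ W [MOD M]) (a : ℕ) :
    coprimeFactorial p a ≡ W ^ a [MOD M] := by
  simpa only [coprimeFactorial, prod_const, card_range] using
    ModEq.prod (s := range a) fun i _ => hblock i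

theorem choose_mul_modEq_choose_of_block_modEq {p M W : ℕ} (hp : 0 < p) (hW : Coprime M W)
    (hblock : ∀ i, ∏ j ∈ Ico 1 p, (i * p + j) ≡ W [MOD M]) (a b : ℕ) :
    (a * p).choose (b * p) ≡ a.choose b [MOD M] := by
  rcases lt_or_ge a b with hab | hba
  · rw [choose_eq_zero_of_lt hab, choose_eq_zero_of_lt (Nat.mul_lt_mul_of_pos_right hab hp)]
  have hF := coprimeFactorial_modEq_pow hblock
  refine ModEq.cancel_right_of_coprime (c := W ^ a) (Coprime.pow_right a hW) ?_
  calc (a * p).choose (b * p) * W ^ a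
      = (a * p).choose (b * p) * (W ^ b * W ^ (a - b)) := by
        rw [← pow_add, Nat.add_sub_cancel' hba]
    _ ≡ (a * p).choose (b * p) * (coprimeFactorial p b * coprimeFactorial p (a - b)) [MOD M] :=
        ((hF b).mul (hF (a - b))).symm.mul_left _
    _ = a.choose b * coprimeFactorial p a := choose_mul_mul_coprimeFactorial hp hba
    _ ≡ a.choose b * W ^ a [MOD M] := (hF a).mul_left _

theorem choose_mul_pow_modEq_choose {p : ℕ} (hp : p.Prime) (hp3 : 3 < p) (a b k : ℕ) :
    (a * p ^ k).choose (b * p ^ k) ≡ a.choose b [MOD p ^ 3] := by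
  have hW : Coprime (p ^ 3) (p - 1)! :=
    Coprime.pow_left 3 ((hp.coprime_iff_not_dvd).2 (by rw [hp.dvd_factorial]; omega))
  induction k with
  | zero => simp only [pow_zero, mul_one]; rfl
  | succ k ih =>
    rw [pow_succ p k, ← mul_assoc, ← mul_assoc]
    exact (choose_mul_modEq_choose_of_block_modEq hp.pos hW
      (prod_Ico_mul_add_modEq_factorial hp hp3) _ _).trans ih

theorem dvd_choose_of_dvd_of_coprime {d N i : ℕ} (hN : d ∣ N) (hi : Coprime d i) :
    d ∣ N.choose i := by
  rcases i with _ | k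
  · simp [coprime_zero_right _ |>.mp hi]
  rcases N with _ | M
  · simp
  have hmul : d ∣ (M + 1).choose (k + 1) * (k + 1) :=
    add_one_mul_choose_eq M k ▸ hN.mul_right _
  exact hi.dvd_of_dvd_mul_right hmul

theorem choose_add_modEq_choose_mul_choose {p k n m n₀ m₀ : ℕ} (hp : p.Prime) (hk : k ≠ 0)
    (hn₀ : n₀ < p) (hm₀ : m₀ < p) :
    (n * p ^ k + n₀).choose (m * p ^ k + m₀) ≡ (n * p ^ k).choose (m * p ^ k) * n₀.choose m₀
      [MOD p ^ k] := by
  rw [← ZMod.natCast_eq_natCast_iff, add_choose_eq, Nat.cast_sum]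
  refine sum_eq_single_of_mem (m * p ^ k, m₀) (HasAntidiagonal.mem_antidiagonal.2 rfl) ?_
  rintro ⟨i, j⟩ hij hne
  rw [HasAntidiagonal.mem_antidiagonal] at hij
  rcases lt_or_ge n₀ j with hj | hj
  · simp [choose_eq_zero_of_lt hj]
  have hpi : ¬ p ∣ i := by
    rintro ⟨s, rfl⟩
    obtain ⟨t, ht⟩ : p ∣ m * p ^ k := (dvd_pow_self p hk).mul_left m
    have hmod := congrArg (· % p) hij
    simp only [ht, add_comm (p * _), add_mul_mod_self_left, mod_eq_of_lt hm₀,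
      mod_eq_of_lt (hj.trans_lt hn₀)] at hmod
    exact hne (Prod.ext (by dsimp only; omega) hmod)
  have hdvd : p ^ k ∣ (n * p ^ k).choose i :=
    dvd_choose_of_dvd_of_coprime (dvd_mul_left _ _)
      (Coprime.pow_left k (hp.coprime_iff_not_dvd.2 hpi))
  rw [Nat.cast_mul, (ZMod.natCast_eq_zero_iff _ _).2 hdvd, zero_mul]

end Nat

theorem bailey_1990_cube (p : ℕ) (hp : p.Prime) (h3 : 3 < p) (n m n₀ m₀ : ℕ)
    (hn₀ : n₀ < p) (hm₀ : m₀ < p) :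
    Nat.choose (n * p ^ 3 + n₀) (m * p ^ 3 + m₀) ≡
      Nat.choose n m * Nat.choose n₀ m₀ [MOD p ^ 3] :=
  (Nat.choose_add_modEq_choose_mul_choose hp three_ne_zero hn₀ hm₀).trans
    ((Nat.choose_mul_pow_modEq_choose hp h3 n m 3).mul_right _)
end

section
/- If p is a prime and n is a nonnegative integer with base-p expansion n = n_0 + n_1 p + ... + n_s p^s, then the number of integers m with 0 ≤ m ≤ n such that C(n, m) is not divisible by p equals ∏_{i=0}^{s} (n_i + 1). -/
/-!
By Lucas' theorem, writing `N = r + p * N'` with `r < p`, we have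
`C(N, m) ≡ C(r, m % p) * C(N', m / p) [MOD p]`, and `C(r, j)` is prime to `p` exactly when
`j ≤ r`. So `m ↦ (m % p, m / p)` is a bijection from the `m` with `p ∤ C(N, m)` onto
`{0, …, r} × {m' | p ∤ C(N', m')}`, which multiplies the count by `r + 1` for each digit.
-/

open Finset

namespace Nat

def nonDvdChoose (p N : ℕ) : Finset ℕ := {m ∈ range (N + 1) | ¬ p ∣ N.choose m}

variable {p N r m : ℕ}

theorem mem_nonDvdChoose : m ∈ nonDvdChoose p N ↔ ¬ p ∣ N.choose m := by
  simp only [nonDvdChoose, mem_filter, mem_range, and_iff_right_iff_imp]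
  intro h
  by_contra hm
  exact h (by rw [choose_eq_zero_of_lt (by omega)]; exact dvd_zero p)

theorem add_mul_mod_div_of_lt {a : ℕ} (b : ℕ) (ha : a < p) :
    (a + p * b) % p = a ∧ (a + p * b) / p = b := by
  have hp : 0 < p := by omega
  rw [add_mul_mod_self_left, mod_eq_of_lt ha, add_mul_div_left _ _ hp, div_eq_of_lt ha, zero_add]
  exact ⟨rfl, rfl⟩

theorem Prime.not_dvd_choose_iff_le (hp : p.Prime) (hr : r < p) {j : ℕ} :
    ¬ p ∣ r.choose j ↔ j ≤ r := by
  refine ⟨fun h => ?_, fun hj => (hp.coprime_iff_not_dvd).mp (hp.coprime_choose_of_lt hr hj)⟩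
  by_contra hj
  exact h (by rw [choose_eq_zero_of_lt (by omega)]; exact dvd_zero p)

theorem Prime.not_dvd_choose_add_mul_iff (hp : p.Prime) (hr : r < p) :
    ¬ p ∣ (r + p * N).choose m ↔ m % p ≤ r ∧ ¬ p ∣ N.choose (m / p) := by
  have : Fact p.Prime := ⟨hp⟩
  have lucas := Choose.choose_modEq_choose_mod_mul_choose_div_nat (p := p) (n := r + p * N) (k := m)
  obtain ⟨hmod, hdiv⟩ := add_mul_mod_div_of_lt N hr
  rw [hmod, hdiv] at lucas
  rw [lucas.dvd_iff dvd_rfl, hp.dvd_mul, not_or, hp.not_dvd_choose_iff_le hr]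

theorem Prime.card_nonDvdChoose_add_mul (hp : p.Prime) (hr : r < p) :
    #(nonDvdChoose p (r + p * N)) = (r + 1) * #(nonDvdChoose p N) := by
  rw [← card_range (r + 1), ← card_product]
  refine card_nbij' (fun m => (m % p, m / p)) (fun x => x.1 + p * x.2) ?_ ?_ ?_ ?_
  · intro m hm
    simp only [coe_product, coe_range, Set.mem_prod, Set.mem_Iio, mem_coe, mem_nonDvdChoose,
      hp.not_dvd_choose_add_mul_iff hr] at hm ⊢
    omega
  · rintro ⟨a, b⟩ hab
    simp only [coe_product, coe_range, Set.mem_prod, Set.mem_Iio, mem_coe] at hab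
    obtain ⟨hmod, hdiv⟩ := add_mul_mod_div_of_lt b (show a < p by omega)
    simp only [mem_coe, mem_nonDvdChoose, hp.not_dvd_choose_add_mul_iff hr, hmod, hdiv]
    exact ⟨by omega, mem_nonDvdChoose.mp hab.2⟩
  · intro m _
    exact mod_add_div m p
  · rintro ⟨a, b⟩ hab
    simp only [coe_product, coe_range, Set.mem_prod, Set.mem_Iio] at hab
    obtain ⟨hmod, hdiv⟩ := add_mul_mod_div_of_lt b (show a < p by omega)
    simp only [hmod, hdiv]

theorem sum_range_succ_mul_pow (n : ℕ → ℕ) (s : ℕ) :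
    ∑ i ∈ range (s + 1), n i * p ^ i = n 0 + p * ∑ i ∈ range s, n (i + 1) * p ^ i := by
  rw [sum_range_succ', mul_sum, add_comm]
  simp only [pow_zero, mul_one, pow_succ]
  congr 1
  exact sum_congr rfl fun i _ => by ring

theorem Prime.card_nonDvdChoose_digits (hp : p.Prime) (s : ℕ) (n : ℕ → ℕ)
    (hn : ∀ i < s, n i < p) :
    #(nonDvdChoose p (∑ i ∈ range s, n i * p ^ i)) = ∏ i ∈ range s, (n i + 1) := by
  induction s generalizing n with
  | zero => simp [nonDvdChoose, filter_singleton, hp.ne_one]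
  | succ s ih =>
    rw [sum_range_succ_mul_pow, hp.card_nonDvdChoose_add_mul (hn 0 (by omega)),
      ih (fun i => n (i + 1)) (fun i hi => hn (i + 1) (by omega)), prod_range_succ' _ s, mul_comm]

end Nat

theorem fine_count (p : ℕ) (hp : p.Prime) (s : ℕ) (n : ℕ → ℕ)
    (hn : ∀ i ≤ s, n i ≤ p - 1) :
    ((Finset.range ((∑ i ∈ Finset.range (s + 1), n i * p ^ i) + 1)).filter
        (fun m => ¬ p ∣ Nat.choose (∑ i ∈ Finset.range (s + 1), n i * p ^ i) m)).card =
      ∏ i ∈ Finset.range (s + 1), (n i + 1) :=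
  hp.card_nonDvdChoose_digits (s + 1) n fun i hi =>
    (Nat.le_sub_one_iff_lt hp.pos).mp (hn i (by omega))
end

section
/- For every prime p and every positive integer s, the sequence a_n = ∑_{k=0}^{n} C(n, k)^s satisfies a_{pn+j} ≡ a_n · a_j (mod p) for all nonnegative integers n and all j with 0 ≤ j ≤ p − 1. -/
/-!
Extend the sum over `k ≤ pn + j` to `k < p(n + 1)` (the extra binomials vanish) and write
`k = pq + r` with `r < p`. By Lucas, `C(pn + j, pq + r) ≡ C(n, q) C(j, r) (mod p)`, so the sum
factors modulo `p` as `(∑_q C(n, q)^s) (∑_{r < p} C(j, r)^s)`, and the second factor is `a_j`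
since `j < p`.
-/

open Finset

theorem sum_range_mul_eq_sum_sum {M : Type*} [AddCommMonoid M] (f : ℕ → M) (p m : ℕ) :
    ∑ k ∈ range (p * m), f k = ∑ q ∈ range m, ∑ r ∈ range p, f (p * q + r) := by
  induction m with
  | zero => simp
  | succ m ih => rw [Nat.mul_succ, sum_range_add, ih, sum_range_succ]

theorem sum_range_choose_pow_of_lt {s n N : ℕ} (hs : s ≠ 0) (hN : n < N) :
    ∑ k ∈ range N, n.choose k ^ s = ∑ k ∈ range (n + 1), n.choose k ^ s := by
  refine (sum_subset (range_subset_range.mpr hN) fun k _ hk => ?_).symm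
  rw [Nat.choose_eq_zero_of_lt (by simpa using hk), zero_pow hs]

theorem choose_mul_add_modEq {p : ℕ} [Fact p.Prime] {n j q r : ℕ} (hj : j < p) (hr : r < p) :
    (p * n + j).choose (p * q + r) ≡ n.choose q * j.choose r [MOD p] := by
  have hp := (Fact.out : p.Prime).pos
  simpa [Nat.mul_add_mod, Nat.mul_add_div hp, Nat.mod_eq_of_lt, Nat.div_eq_of_lt, hj, hr,
    mul_comm] using Choose.choose_modEq_choose_mod_mul_choose_div_nat (n := p * n + j)
      (k := p * q + r) (p := p)

theorem power_sums_lucas_property (p : ℕ) (hp : p.Prime) (s : ℕ) (hs : 0 < s)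
    (n j : ℕ) (hj : j ≤ p - 1) :
    (∑ k ∈ Finset.range (p * n + j + 1), (Nat.choose (p * n + j) k) ^ s) ≡
      (∑ k ∈ Finset.range (n + 1), (Nat.choose n k) ^ s) *
      (∑ k ∈ Finset.range (j + 1), (Nat.choose j k) ^ s) [MOD p] := by
  have := Fact.mk hp
  have hjp : j < p := by have := hp.pos; omega
  calc ∑ k ∈ range (p * n + j + 1), (p * n + j).choose k ^ s
      = ∑ k ∈ range (p * (n + 1)), (p * n + j).choose k ^ s :=
        (sum_range_choose_pow_of_lt hs.ne' (by rw [Nat.mul_succ]; omega)).symm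
    _ = ∑ q ∈ range (n + 1), ∑ r ∈ range p, (p * n + j).choose (p * q + r) ^ s :=
        sum_range_mul_eq_sum_sum _ _ _
    _ ≡ ∑ q ∈ range (n + 1), ∑ r ∈ range p, (n.choose q * j.choose r) ^ s [MOD p] :=
        Nat.ModEq.sum fun _ _ => Nat.ModEq.sum fun _ hr =>
          (choose_mul_add_modEq hjp (mem_range.mp hr)).pow s
    _ = (∑ q ∈ range (n + 1), n.choose q ^ s) * ∑ r ∈ range p, j.choose r ^ s := by
        simp_rw [mul_pow, sum_mul_sum]
    _ = _ := by rw [sum_range_choose_pow_of_lt hs.ne' hjp]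
end
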